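/- arXiv:2312.05607 — 9 statements merged into one kernel-verified Lean document; each statement's English description precedes it below -/
import Mathlib

section
/- (Converse Lyapunov function with incremental difference bound.) Suppose f is uniformly L_f-Lipschitz on D and the system x_{k+1} = f(k, x_k) is uniformly exponentially stable in D, i.e. there exist d > 0 and λ ∈ (0,1) such that every solution with x_{k₀} = ξ ∈ D satisfies ‖x_k‖ ≤ d‖ξ‖λ^{k−k₀} for all k ≥ k₀. Then there exist a function V : ℕ → ℝⁿ → ℝ and constants c₁, c₂, c₃ > 0 and β ∈ (0,1) such that for all ξ, ζ ∈ D and all k: (a) c₁‖ξ‖² ≤ V(k, ξ) ≤ c₂‖ξ‖²; (b) V(k+1, f(k, ξ)) ≤ β² V(k, ξ); (c) |V(k, ξ) − V(k, ζ)| ≤ c₃ ‖ξ − ζ‖ (‖ξ‖ + ‖ζ‖). -/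
/-!
The Lyapunov function is the finite-horizon energy `V k ξ = ∑_{j<N} ‖x_{k+j}‖²` of the
solution started at `ξ` at time `k`. Exponential stability gives `‖ξ‖² ≤ V ≤ N d² ‖ξ‖²`, and
one step along the solution changes `V` by `‖x_{k+N}‖² - ‖ξ‖²`; choosing `N` with
`d² λ^{2N} ≤ 1/2` makes this at most `-‖ξ‖²/2 ≤ -V/(2c₂)`. The difference bound follows term
by term from `|‖a‖² - ‖b‖²| ≤ ‖a - b‖ (‖a‖ + ‖b‖)`, the Lipschitz bound `L_f^j` on `j` steps
and the decay bound `d λ^j`.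
-/

open Finset Set Filter Topology

theorem abs_norm_sq_sub_norm_sq_le {E : Type*} [SeminormedAddCommGroup E] (a b : E) :
    |‖a‖ ^ 2 - ‖b‖ ^ 2| ≤ ‖a - b‖ * (‖a‖ + ‖b‖) := by
  rw [sq_sub_sq, abs_mul, abs_of_nonneg (by positivity : (0 : ℝ) ≤ ‖a‖ + ‖b‖), mul_comm]
  exact mul_le_mul_of_nonneg_right (abs_norm_sub_norm_le a b) (by positivity)

theorem exists_sq_eq_of_pos_of_lt_one {t : ℝ} (ht0 : 0 < t) (ht1 : t < 1) :
    ∃ β : ℝ, 0 < β ∧ β < 1 ∧ β ^ 2 = t :=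
  ⟨√t, Real.sqrt_pos.2 ht0, (Real.sqrt_lt' one_pos).2 (by simpa using ht1),
    Real.sq_sqrt ht0.le⟩

theorem exists_pos_mul_sq_pow_le_half (d : ℝ) {lam : ℝ} (h0 : 0 < lam) (h1 : lam < 1) :
    ∃ N : ℕ, 0 < N ∧ d ^ 2 * (lam ^ 2) ^ N ≤ 1 / 2 := by
  have hlim : Tendsto (fun N : ℕ => d ^ 2 * (lam ^ 2) ^ N) atTop (𝓝 0) := by
    have hlam2 : lam ^ 2 < 1 := by nlinarith
    simpa using (tendsto_pow_atTop_nhds_zero_of_lt_one (by positivity) hlam2).const_mul (d ^ 2)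
  have hsmall : ∀ᶠ N : ℕ in atTop, d ^ 2 * (lam ^ 2) ^ N < 1 / 2 :=
    hlim.eventually (gt_mem_nhds (by norm_num))
  obtain ⟨N, hN, hpos⟩ := (hsmall.and (eventually_gt_atTop 0)).exists
  exact ⟨N, hpos, hN.le⟩

section Trajectory

variable {E : Type*}

def trajectory (f : ℕ → E → E) (k : ℕ) : ℕ → E → E
  | 0 => id
  | j + 1 => fun ξ => f (k + j) (trajectory f k j ξ)

variable {f : ℕ → E → E} {D : Set E}

@[simp]
theorem trajectory_zero (k : ℕ) (ξ : E) : trajectory f k 0 ξ = ξ := rfl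

theorem trajectory_succ (k j : ℕ) (ξ : E) :
    trajectory f k (j + 1) ξ = f (k + j) (trajectory f k j ξ) := rfl

theorem trajectory_succ_start (k j : ℕ) (ξ : E) :
    trajectory f (k + 1) j (f k ξ) = trajectory f k (j + 1) ξ := by
  induction j with
  | zero => rfl
  | succ j ih =>
    rw [trajectory_succ, ih, trajectory_succ (j := j + 1), Nat.add_right_comm, Nat.add_assoc]

theorem trajectory_mem (hinv : ∀ k, MapsTo (f k) D D) (k j : ℕ) {ξ : E} (hξ : ξ ∈ D) :
    trajectory f k j ξ ∈ D := by
  induction j with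
  | zero => exact hξ
  | succ j ih => exact hinv _ ih

variable [SeminormedAddCommGroup E]

def IsUniformlyExpStableOn (f : ℕ → E → E) (D : Set E) (d lam : ℝ) : Prop :=
  ∀ (k₀ : ℕ) (x : ℕ → E), x k₀ ∈ D → (∀ k, k₀ ≤ k → x (k + 1) = f k (x k)) →
    ∀ k, k₀ ≤ k → ‖x k‖ ≤ d * ‖x k₀‖ * lam ^ (k - k₀)

theorem IsUniformlyExpStableOn.norm_trajectory_le {d lam : ℝ}
    (hES : IsUniformlyExpStableOn f D d lam) (k j : ℕ) {ξ : E} (hξ : ξ ∈ D) :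
    ‖trajectory f k j ξ‖ ≤ d * ‖ξ‖ * lam ^ j := by
  have hsol : ∀ m, k ≤ m →
      trajectory f k (m + 1 - k) ξ = f m (trajectory f k (m - k) ξ) := by
    intro m hm
    obtain ⟨i, rfl⟩ := Nat.exists_eq_add_of_le hm
    rw [show k + i + 1 - k = i + 1 by omega, Nat.add_sub_cancel_left, trajectory_succ]
  simpa using hES k (fun m => trajectory f k (m - k) ξ) (by simpa using hξ) hsol (k + j) (by omega)

theorem norm_trajectory_sub_le {L : ℝ} (hL : 0 ≤ L) (hinv : ∀ k, MapsTo (f k) D D)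
    (hLip : ∀ k, ∀ p ∈ D, ∀ q ∈ D, ‖f k p - f k q‖ ≤ L * ‖p - q‖)
    (k j : ℕ) {ξ ζ : E} (hξ : ξ ∈ D) (hζ : ζ ∈ D) :
    ‖trajectory f k j ξ - trajectory f k j ζ‖ ≤ L ^ j * ‖ξ - ζ‖ := by
  induction j with
  | zero => simp
  | succ j ih =>
    calc ‖trajectory f k (j + 1) ξ - trajectory f k (j + 1) ζ‖
        ≤ L * ‖trajectory f k j ξ - trajectory f k j ζ‖ :=
          hLip _ _ (trajectory_mem hinv k j hξ) _ (trajectory_mem hinv k j hζ)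
      _ ≤ L * (L ^ j * ‖ξ - ζ‖) := mul_le_mul_of_nonneg_left ih hL
      _ = L ^ (j + 1) * ‖ξ - ζ‖ := by ring

end Trajectory

section HorizonEnergy

variable {E : Type*} [SeminormedAddCommGroup E] {f : ℕ → E → E} {D : Set E}

def horizonEnergy (f : ℕ → E → E) (N k : ℕ) (ξ : E) : ℝ :=
  ∑ j ∈ range N, ‖trajectory f k j ξ‖ ^ 2

theorem norm_sq_le_horizonEnergy {N : ℕ} (hN : 0 < N) (k : ℕ) (ξ : E) :
    ‖ξ‖ ^ 2 ≤ horizonEnergy f N k ξ :=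
  single_le_sum (f := fun j => ‖trajectory f k j ξ‖ ^ 2) (fun _ _ => by positivity)
    (mem_range.2 hN)

theorem horizonEnergy_succ_start (N k : ℕ) (ξ : E) :
    horizonEnergy f N (k + 1) (f k ξ) =
      horizonEnergy f N k ξ - ‖ξ‖ ^ 2 + ‖trajectory f k N ξ‖ ^ 2 := by
  simp only [horizonEnergy, trajectory_succ_start]
  have := sum_range_succ' (fun j => ‖trajectory f k j ξ‖ ^ 2) N
  rw [sum_range_succ, trajectory_zero] at this
  linarith

variable {d lam : ℝ}

theorem IsUniformlyExpStableOn.horizonEnergy_le (hES : IsUniformlyExpStableOn f D d lam)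
    (hlam0 : 0 ≤ lam) (hlam1 : lam ≤ 1) (N k : ℕ) {ξ : E} (hξ : ξ ∈ D) :
    horizonEnergy f N k ξ ≤ N * d ^ 2 * ‖ξ‖ ^ 2 := by
  calc horizonEnergy f N k ξ ≤ ∑ _j ∈ range N, d ^ 2 * ‖ξ‖ ^ 2 := by
        refine sum_le_sum fun j _ => ?_
        have hpow : (lam ^ j) ^ 2 ≤ 1 := pow_le_one₀ (by positivity) (pow_le_one₀ hlam0 hlam1)
        calc ‖trajectory f k j ξ‖ ^ 2 ≤ (d * ‖ξ‖ * lam ^ j) ^ 2 :=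
              pow_le_pow_left₀ (norm_nonneg _) (hES.norm_trajectory_le k j hξ) 2
          _ = d ^ 2 * ‖ξ‖ ^ 2 * (lam ^ j) ^ 2 := by ring
          _ ≤ d ^ 2 * ‖ξ‖ ^ 2 := mul_le_of_le_one_right (by positivity) hpow
    _ = N * d ^ 2 * ‖ξ‖ ^ 2 := by rw [sum_const, card_range, nsmul_eq_mul, mul_assoc]

theorem IsUniformlyExpStableOn.horizonEnergy_succ_start_le
    (hES : IsUniformlyExpStableOn f D d lam) {N : ℕ} (hN : d ^ 2 * (lam ^ 2) ^ N ≤ 1 / 2)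
    {c : ℝ} (hc : 0 < c) (hV : ∀ k, ∀ ξ ∈ D, horizonEnergy f N k ξ ≤ c * ‖ξ‖ ^ 2)
    (k : ℕ) {ξ : E} (hξ : ξ ∈ D) :
    horizonEnergy f N (k + 1) (f k ξ) ≤ (1 - 1 / (2 * c)) * horizonEnergy f N k ξ := by
  have htail : ‖trajectory f k N ξ‖ ^ 2 ≤ ‖ξ‖ ^ 2 / 2 :=
    calc ‖trajectory f k N ξ‖ ^ 2 ≤ (d * ‖ξ‖ * lam ^ N) ^ 2 :=
          pow_le_pow_left₀ (norm_nonneg _) (hES.norm_trajectory_le k N hξ) 2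
      _ = d ^ 2 * (lam ^ 2) ^ N * ‖ξ‖ ^ 2 := by ring
      _ ≤ 1 / 2 * ‖ξ‖ ^ 2 := by gcongr
      _ = ‖ξ‖ ^ 2 / 2 := by ring
  have hnorm : horizonEnergy f N k ξ / c ≤ ‖ξ‖ ^ 2 := by
    rw [div_le_iff₀ hc, mul_comm]; exact hV k ξ hξ
  calc horizonEnergy f N (k + 1) (f k ξ)
      ≤ horizonEnergy f N k ξ - ‖ξ‖ ^ 2 / 2 := by rw [horizonEnergy_succ_start]; linarith
    _ ≤ horizonEnergy f N k ξ - horizonEnergy f N k ξ / c / 2 := by linarith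
    _ = (1 - 1 / (2 * c)) * horizonEnergy f N k ξ := by field_simp

theorem IsUniformlyExpStableOn.abs_horizonEnergy_sub_le
    (hES : IsUniformlyExpStableOn f D d lam) {L : ℝ} (hL : 0 ≤ L)
    (hinv : ∀ k, MapsTo (f k) D D)
    (hLip : ∀ k, ∀ p ∈ D, ∀ q ∈ D, ‖f k p - f k q‖ ≤ L * ‖p - q‖)
    (N k : ℕ) {ξ ζ : E} (hξ : ξ ∈ D) (hζ : ζ ∈ D) :
    |horizonEnergy f N k ξ - horizonEnergy f N k ζ| ≤
      (d * ∑ j ∈ range N, (L * lam) ^ j) * ‖ξ - ζ‖ * (‖ξ‖ + ‖ζ‖) := by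
  rw [horizonEnergy, horizonEnergy, ← sum_sub_distrib, mul_sum, sum_mul, sum_mul]
  refine (abs_sum_le_sum_abs _ _).trans (sum_le_sum fun j _ => ?_)
  calc |‖trajectory f k j ξ‖ ^ 2 - ‖trajectory f k j ζ‖ ^ 2|
      ≤ ‖trajectory f k j ξ - trajectory f k j ζ‖ *
          (‖trajectory f k j ξ‖ + ‖trajectory f k j ζ‖) := abs_norm_sq_sub_norm_sq_le _ _
    _ ≤ (L ^ j * ‖ξ - ζ‖) * (d * ‖ξ‖ * lam ^ j + d * ‖ζ‖ * lam ^ j) := by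
        gcongr
        · exact norm_trajectory_sub_le hL hinv hLip k j hξ hζ
        · exact hES.norm_trajectory_le k j hξ
        · exact hES.norm_trajectory_le k j hζ
    _ = d * (L * lam) ^ j * ‖ξ - ζ‖ * (‖ξ‖ + ‖ζ‖) := by ring

end HorizonEnergy

theorem converse_lyapunov_with_difference_bound_general
    (n : ℕ) (D : Set (EuclideanSpace ℝ (Fin n)))
    (f : ℕ → EuclideanSpace ℝ (Fin n) → EuclideanSpace ℝ (Fin n))
    (Lf d lam : ℝ)
    (hinv : ∀ k, ∀ x ∈ D, f k x ∈ D)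
    (hLf : 0 < Lf)
    (hLip : ∀ k, ∀ p ∈ D, ∀ q ∈ D, ‖f k p - f k q‖ ≤ Lf * ‖p - q‖)
    (hd : 0 < d) (hlam : 0 < lam ∧ lam < 1)
    (hES : ∀ (k₀ : ℕ) (x : ℕ → EuclideanSpace ℝ (Fin n)), x k₀ ∈ D →
      (∀ k, k₀ ≤ k → x (k + 1) = f k (x k)) →
      ∀ k, k₀ ≤ k → ‖x k‖ ≤ d * ‖x k₀‖ * lam ^ (k - k₀)) :
    ∃ (V : ℕ → EuclideanSpace ℝ (Fin n) → ℝ) (c₁ c₂ c₃ β : ℝ),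
      0 < c₁ ∧ 0 < c₂ ∧ 0 < c₃ ∧ 0 < β ∧ β < 1 ∧
      (∀ k, ∀ ξ ∈ D, c₁ * ‖ξ‖ ^ 2 ≤ V k ξ ∧ V k ξ ≤ c₂ * ‖ξ‖ ^ 2) ∧
      (∀ k, ∀ ξ ∈ D, V (k + 1) (f k ξ) ≤ β ^ 2 * V k ξ) ∧
      (∀ k, ∀ ξ ∈ D, ∀ ζ ∈ D,
        |V k ξ - V k ζ| ≤ c₃ * ‖ξ - ζ‖ * (‖ξ‖ + ‖ζ‖)) := by
  have hES : IsUniformlyExpStableOn f D d lam := hES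
  obtain ⟨N, hN, hdecay⟩ := exists_pos_mul_sq_pow_le_half d hlam.1 hlam.2
  set c₂ : ℝ := N * d ^ 2 + 1
  have hc₂ : 1 ≤ c₂ := le_add_of_nonneg_left (by positivity)
  have hupper : ∀ k, ∀ ξ ∈ D, horizonEnergy f N k ξ ≤ c₂ * ‖ξ‖ ^ 2 := fun k ξ hξ =>
    (hES.horizonEnergy_le hlam.1.le hlam.2.le N k hξ).trans (by gcongr; linarith)
  obtain ⟨β, hβ0, hβ1, hβ⟩ := exists_sq_eq_of_pos_of_lt_one (t := 1 - 1 / (2 * c₂))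
    (by rw [sub_pos, div_lt_one (by positivity)]; linarith)
    (by simp only [sub_lt_self_iff]; positivity)
  have hc₃ : 0 < d * ∑ j ∈ range N, (Lf * lam) ^ j :=
    mul_pos hd (sum_pos (fun j _ => pow_pos (mul_pos hLf hlam.1) j) ⟨0, mem_range.2 hN⟩)
  refine ⟨horizonEnergy f N, 1, c₂, _, β, one_pos, by positivity, hc₃, hβ0, hβ1,
    fun k ξ hξ => ⟨(one_mul _).trans_le (norm_sq_le_horizonEnergy hN k ξ), hupper k ξ hξ⟩,
    fun k ξ hξ => hβ ▸ hES.horizonEnergy_succ_start_le hdecay (by positivity) hupper k hξ,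
    fun k ξ hξ ζ hζ => hES.abs_horizonEnergy_sub_le hLf.le hinv hLip N k hξ hζ⟩

/-- Converse Lyapunov function with incremental difference bound (Lemma 4). -/
theorem converse_lyapunov_with_difference_bound
    (n : ℕ) (D : Set (EuclideanSpace ℝ (Fin n)))
    (f : ℕ → EuclideanSpace ℝ (Fin n) → EuclideanSpace ℝ (Fin n))
    (Lf d lam : ℝ)
    (hD : IsCompact D) (h0D : (0 : EuclideanSpace ℝ (Fin n)) ∈ D)
    (hinv : ∀ k, ∀ x ∈ D, f k x ∈ D)
    (hf0 : ∀ k, f k 0 = 0)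
    (hLf : 0 < Lf)
    (hLip : ∀ k, ∀ p ∈ D, ∀ q ∈ D, ‖f k p - f k q‖ ≤ Lf * ‖p - q‖)
    (hd : 0 < d) (hlam : 0 < lam ∧ lam < 1)
    (hES : ∀ (k₀ : ℕ) (x : ℕ → EuclideanSpace ℝ (Fin n)), x k₀ ∈ D →
      (∀ k, k₀ ≤ k → x (k + 1) = f k (x k)) →
      ∀ k, k₀ ≤ k → ‖x k‖ ≤ d * ‖x k₀‖ * lam ^ (k - k₀)) :
    ∃ (V : ℕ → EuclideanSpace ℝ (Fin n) → ℝ) (c₁ c₂ c₃ β : ℝ),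
      0 < c₁ ∧ 0 < c₂ ∧ 0 < c₃ ∧ 0 < β ∧ β < 1 ∧
      (∀ k, ∀ ξ ∈ D, c₁ * ‖ξ‖ ^ 2 ≤ V k ξ ∧ V k ξ ≤ c₂ * ‖ξ‖ ^ 2) ∧
      (∀ k, ∀ ξ ∈ D, V (k + 1) (f k ξ) ≤ β ^ 2 * V k ξ) ∧
      (∀ k, ∀ ξ ∈ D, ∀ ζ ∈ D,
        |V k ξ - V k ζ| ≤ c₃ * ‖ξ - ζ‖ * (‖ξ‖ + ‖ζ‖)) :=
  converse_lyapunov_with_difference_bound_general n D f Lf d lam hinv hLf hLip hd hlam hES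
end

section
/- (Discrete-time contraction/Demidovich condition implies local exponential incremental stability.) Suppose there exist a sequence of symmetric matrices P(k) ∈ ℝ^{n×n}, constants 0 < p ≤ P̄ with p·I ⪯ P(k) ⪯ P̄·I for all k, and ρ ∈ (0,1), such that for all x ∈ D̃₀ and all k the matrix (∂f/∂x)(k,x)ᵀ P(k+1) (∂f/∂x)(k,x) − ρ² P(k) is negative definite. Then there exist r > 0 with the closed ball B(r) (centered at the origin) contained in D̃₀, and a constant d' > 0, such that for every k₀ and any two solutions x, y of x_{k+1} = f(k, x_k) with x_{k₀}, y_{k₀} ∈ B(r), one has x_k, y_k ∈ D̃₀ for all k ≥ k₀ and ‖x_k − y_k‖ ≤ d' ρ^{k−k₀} ‖x_{k₀} − y_{k₀}‖ for all k ≥ k₀. -/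
/-!
Write `‖u‖_P := ‖P^{1/2} u‖` for a positive semidefinite `P`, so that `‖u‖_P ^ 2 = uᵀ P u`. The
bounds on `P k` give `√p ‖u‖ ≤ ‖u‖_{P k} ≤ √P̄ ‖u‖`, and the Demidovich inequality says precisely
that every Jacobian on `D₀` maps `‖·‖_{P k}` to `‖·‖_{P (k+1)}` with gain `ρ`. By the mean value
inequality on a closed ball `B(R) ⊆ D₀`, each `f k` is then a `ρ`-contraction from `‖·‖_{P k}` to
`‖·‖_{P (k+1)}` on `B(R)`. As `f k 0 = 0`, the sublevel sets `{‖u‖_{P k} ≤ √p R}`, which lie in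
`B(R)`, are carried into one another, so solutions starting in `B(√p R / √P̄)` never leave `B(R)`;
iterating the contraction and comparing norms gives the estimate with `d' = √P̄ / √p`.
-/

open Matrix
open scoped MatrixOrder RealInnerProductSpace

theorem Convex.norm_image_sub_le_of_norm_hasFDerivWithin_apply_le {E G : Type*}
    [NormedAddCommGroup E] [NormedSpace ℝ E] [NormedAddCommGroup G] [NormedSpace ℝ G]
    {f : E → G} {f' : E → E →L[ℝ] G} {s : Set E} {x y : E} {C : ℝ}
    (hf : ∀ z ∈ s, HasFDerivWithinAt f (f' z) s z) (bound : ∀ z ∈ s, ‖f' z (y - x)‖ ≤ C)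
    (hs : Convex ℝ s) (xs : x ∈ s) (ys : y ∈ s) : ‖f y - f x‖ ≤ C := by
  set g := (AffineMap.lineMap x y : ℝ → E)
  have segm : Set.MapsTo g (Set.Icc 0 1) s := hs.mapsTo_lineMap xs ys
  have hderiv : ∀ t ∈ Set.Icc (0 : ℝ) 1,
      HasDerivWithinAt (f ∘ g) (f' (g t) (y - x)) (Set.Icc 0 1) t := fun t ht => by
    simpa using (hf (g t) (segm ht)).comp_hasDerivWithinAt _ AffineMap.hasDerivWithinAt_lineMap segm
  simpa [g] using norm_image_sub_le_of_norm_deriv_le_segment_01' hderiv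
    fun t ht => bound _ (segm (Set.Ico_subset_Icc_self ht))

section Trajectory

variable {E : Type*} {f : ℕ → E → E} {V : ℕ → E → ℝ} {s : Set E} {ρ c : ℝ} {k₀ : ℕ}
  {x y : ℕ → E}

theorem forall_le_of_sublevel_subset (hρ0 : 0 ≤ ρ) (hρ1 : ρ ≤ 1) (hc : 0 ≤ c)
    (hsub : ∀ k u, V k u ≤ c → u ∈ s) (hstep : ∀ k, ∀ a ∈ s, V (k + 1) (f k a) ≤ ρ * V k a)
    (hx : ∀ k, k₀ ≤ k → x (k + 1) = f k (x k)) (hx₀ : V k₀ (x k₀) ≤ c) :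
    ∀ k, k₀ ≤ k → V k (x k) ≤ c := by
  intro k hk
  induction k, hk using Nat.le_induction with
  | base => exact hx₀
  | succ k hk ih =>
    calc V (k + 1) (x (k + 1)) = V (k + 1) (f k (x k)) := by rw [hx k hk]
      _ ≤ ρ * V k (x k) := hstep k _ (hsub k _ ih)
      _ ≤ ρ * c := mul_le_mul_of_nonneg_left ih hρ0
      _ ≤ c := mul_le_of_le_one_left hc hρ1

theorem le_pow_mul_of_step_le [AddGroup E] (hρ0 : 0 ≤ ρ)
    (hstep : ∀ k, ∀ a ∈ s, ∀ b ∈ s, V (k + 1) (f k a - f k b) ≤ ρ * V k (a - b))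
    (hx : ∀ k, k₀ ≤ k → x (k + 1) = f k (x k)) (hy : ∀ k, k₀ ≤ k → y (k + 1) = f k (y k))
    (hxs : ∀ k, k₀ ≤ k → x k ∈ s) (hys : ∀ k, k₀ ≤ k → y k ∈ s) :
    ∀ k, k₀ ≤ k → V k (x k - y k) ≤ ρ ^ (k - k₀) * V k₀ (x k₀ - y k₀) := by
  intro k hk
  induction k, hk using Nat.le_induction with
  | base => simp
  | succ k hk ih =>
    calc V (k + 1) (x (k + 1) - y (k + 1)) = V (k + 1) (f k (x k) - f k (y k)) := by
          rw [hx k hk, hy k hk]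
      _ ≤ ρ * V k (x k - y k) := hstep k _ (hxs k hk) _ (hys k hk)
      _ ≤ ρ * (ρ ^ (k - k₀) * V k₀ (x k₀ - y k₀)) := mul_le_mul_of_nonneg_left ih hρ0
      _ = ρ ^ (k + 1 - k₀) * V k₀ (x k₀ - y k₀) := by rw [Nat.succ_sub hk, pow_succ']; ring

theorem mem_closedBall_and_norm_sub_le_of_contraction [SeminormedAddCommGroup E] {m M R : ℝ}
    (hm : 0 < m) (hM : 0 < M) (hR : 0 ≤ R) (hρ0 : 0 ≤ ρ) (hρ1 : ρ ≤ 1)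
    (hlow : ∀ k u, m * ‖u‖ ≤ V k u) (hhigh : ∀ k u, V k u ≤ M * ‖u‖) (hf0 : ∀ k, f k 0 = 0)
    (hstep : ∀ k, ∀ a ∈ Metric.closedBall 0 R, ∀ b ∈ Metric.closedBall 0 R,
      V (k + 1) (f k a - f k b) ≤ ρ * V k (a - b))
    (hx : ∀ k, k₀ ≤ k → x (k + 1) = f k (x k)) (hy : ∀ k, k₀ ≤ k → y (k + 1) = f k (y k))
    (hx₀ : x k₀ ∈ Metric.closedBall 0 (m * R / M)) (hy₀ : y k₀ ∈ Metric.closedBall 0 (m * R / M)) :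
    (∀ k, k₀ ≤ k → x k ∈ Metric.closedBall 0 R ∧ y k ∈ Metric.closedBall 0 R) ∧
      ∀ k, k₀ ≤ k → ‖x k - y k‖ ≤ M / m * ρ ^ (k - k₀) * ‖x k₀ - y k₀‖ := by
  have hsub : ∀ k u, V k u ≤ m * R → u ∈ Metric.closedBall 0 R := fun k u hu => by
    rw [mem_closedBall_zero_iff]
    exact le_of_mul_le_mul_left ((hlow k u).trans hu) hm
  have hstart : ∀ z ∈ Metric.closedBall 0 (m * R / M), V k₀ z ≤ m * R := fun z hz => by
    rw [mem_closedBall_zero_iff, le_div_iff₀ hM] at hz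
    linarith [hhigh k₀ z]
  have hstep₀ : ∀ k, ∀ a ∈ Metric.closedBall 0 R, V (k + 1) (f k a) ≤ ρ * V k a :=
    fun k a ha => by simpa [hf0] using hstep k a ha 0 (Metric.mem_closedBall_self hR)
  have hxs := forall_le_of_sublevel_subset hρ0 hρ1 (by positivity) hsub hstep₀ hx (hstart _ hx₀)
  have hys := forall_le_of_sublevel_subset hρ0 hρ1 (by positivity) hsub hstep₀ hy (hstart _ hy₀)
  refine ⟨fun k hk => ⟨hsub k _ (hxs k hk), hsub k _ (hys k hk)⟩, fun k hk => ?_⟩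
  have hV := le_pow_mul_of_step_le hρ0 hstep hx hy (fun k hk => hsub k _ (hxs k hk))
    (fun k hk => hsub k _ (hys k hk)) k hk
  rw [div_mul_eq_mul_div, div_mul_eq_mul_div, le_div_iff₀ hm]
  calc ‖x k - y k‖ * m ≤ V k (x k - y k) := by rw [mul_comm]; exact hlow k _
    _ ≤ ρ ^ (k - k₀) * V k₀ (x k₀ - y k₀) := hV
    _ ≤ ρ ^ (k - k₀) * (M * ‖x k₀ - y k₀‖) := by gcongr; exact hhigh k₀ _
    _ = M * ρ ^ (k - k₀) * ‖x k₀ - y k₀‖ := by ring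

end Trajectory

namespace Matrix

variable {ι : Type*} [Fintype ι] [DecidableEq ι]

omit [DecidableEq ι] in
lemma PosSemidef.transpose_mul_mul_same {m : Type*} [Finite m] {Q : Matrix ι ι ℝ}
    (hQ : Q.PosSemidef) (A : Matrix ι m ℝ) : (Aᵀ * Q * A).PosSemidef := by
  simpa using hQ.conjTranspose_mul_mul_same A

noncomputable def weightedNorm (P : Matrix ι ι ℝ) (u : EuclideanSpace ℝ ι) : ℝ :=
  ‖toEuclideanCLM (𝕜 := ℝ) (CFC.sqrt P) u‖

lemma sq_weightedNorm {P : Matrix ι ι ℝ} (hP : P.PosSemidef) (u : EuclideanSpace ℝ ι) :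
    weightedNorm P u ^ 2 = u ⬝ᵥ P *ᵥ u := by
  have hS : IsSelfAdjoint (toEuclideanCLM (𝕜 := ℝ) (CFC.sqrt P)) :=
    (CFC.sqrt_nonneg P).isSelfAdjoint.map _
  rw [weightedNorm, ← real_inner_self_eq_norm_sq, ← ContinuousLinearMap.adjoint_inner_left,
    hS.adjoint_eq, ← ContinuousLinearMap.comp_apply, ← ContinuousLinearMap.mul_def, ← map_mul,
    CFC.sqrt_mul_sqrt_self _ hP.nonneg, real_inner_comm, inner_toEuclideanCLM]

lemma weightedNorm_nonneg (P : Matrix ι ι ℝ) (u : EuclideanSpace ℝ ι) : 0 ≤ weightedNorm P u :=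
  norm_nonneg _

lemma weightedNorm_le_weightedNorm {P Q : Matrix ι ι ℝ} (hP : P.PosSemidef)
    (hPQ : (Q - P).PosSemidef) (u : EuclideanSpace ℝ ι) : weightedNorm P u ≤ weightedNorm Q u := by
  have hQ : Q.PosSemidef := by simpa using hPQ.add hP
  have hquad := hPQ.dotProduct_mulVec_nonneg u
  rw [star_trivial, sub_mulVec, dotProduct_sub, sub_nonneg] at hquad
  rwa [← sq_le_sq₀ (weightedNorm_nonneg _ _) (weightedNorm_nonneg _ _), sq_weightedNorm hP,
    sq_weightedNorm hQ]

lemma weightedNorm_one (u : EuclideanSpace ℝ ι) : weightedNorm 1 u = ‖u‖ := by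
  simp [weightedNorm]

lemma weightedNorm_smul {P : Matrix ι ι ℝ} (hP : P.PosSemidef) {c : ℝ} (hc : 0 ≤ c)
    (u : EuclideanSpace ℝ ι) : weightedNorm (c • P) u = √c * weightedNorm P u := by
  rw [← sq_eq_sq₀ (weightedNorm_nonneg _ _) (mul_nonneg (Real.sqrt_nonneg c)
    (weightedNorm_nonneg _ _)), mul_pow, Real.sq_sqrt hc,
    sq_weightedNorm (hP.smul hc), sq_weightedNorm hP, smul_mulVec, dotProduct_smul, smul_eq_mul]

lemma weightedNorm_toEuclideanCLM {Q : Matrix ι ι ℝ} (hQ : Q.PosSemidef) (A : Matrix ι ι ℝ)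
    (u : EuclideanSpace ℝ ι) :
    weightedNorm Q (toEuclideanCLM (𝕜 := ℝ) A u) = weightedNorm (Aᵀ * Q * A) u := by
  rw [← sq_eq_sq₀ (weightedNorm_nonneg _ _) (weightedNorm_nonneg _ _), sq_weightedNorm hQ,
    sq_weightedNorm (hQ.transpose_mul_mul_same A), ofLp_toEuclideanCLM, Matrix.mul_assoc,
    ← mulVec_mulVec, ← mulVec_mulVec, dotProduct_mulVec u.ofLp, vecMul_transpose]

lemma mul_norm_le_weightedNorm {P : Matrix ι ι ℝ} {c : ℝ} (hc : 0 ≤ c)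
    (h : (P - c • 1).PosSemidef) (u : EuclideanSpace ℝ ι) : √c * ‖u‖ ≤ weightedNorm P u := by
  rw [← weightedNorm_one, ← weightedNorm_smul PosSemidef.one hc]
  exact weightedNorm_le_weightedNorm (PosSemidef.one.smul hc) h u

lemma weightedNorm_le_mul_norm {P : Matrix ι ι ℝ} (hP : P.PosSemidef) {c : ℝ} (hc : 0 ≤ c)
    (h : (c • 1 - P).PosSemidef) (u : EuclideanSpace ℝ ι) : weightedNorm P u ≤ √c * ‖u‖ := by
  rw [← weightedNorm_one, ← weightedNorm_smul PosSemidef.one hc]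
  exact weightedNorm_le_weightedNorm hP h u

theorem _root_.Convex.weightedNorm_image_sub_le {f : EuclideanSpace ℝ ι → EuclideanSpace ℝ ι}
    {A : EuclideanSpace ℝ ι → Matrix ι ι ℝ} {P Q : Matrix ι ι ℝ} {s : Set (EuclideanSpace ℝ ι)}
    {ρ : ℝ} (hs : Convex ℝ s) (hP : P.PosSemidef) (hQ : Q.PosSemidef) (hρ : 0 ≤ ρ)
    (hf : ∀ x ∈ s, HasFDerivWithinAt f (toEuclideanCLM (𝕜 := ℝ) (A x)) s x)
    (hA : ∀ x ∈ s, (ρ ^ 2 • P - (A x)ᵀ * Q * A x).PosSemidef) {a b : EuclideanSpace ℝ ι}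
    (ha : a ∈ s) (hb : b ∈ s) : weightedNorm Q (f a - f b) ≤ ρ * weightedNorm P (a - b) := by
  have hderiv : ∀ x ∈ s, ∀ v, weightedNorm Q (toEuclideanCLM (𝕜 := ℝ) (A x) v) ≤
      ρ * weightedNorm P v := fun x hx v =>
    calc weightedNorm Q (toEuclideanCLM (𝕜 := ℝ) (A x) v) = weightedNorm ((A x)ᵀ * Q * A x) v :=
          weightedNorm_toEuclideanCLM hQ _ _
      _ ≤ weightedNorm (ρ ^ 2 • P) v :=
          weightedNorm_le_weightedNorm (hQ.transpose_mul_mul_same _) (hA x hx) v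
      _ = ρ * weightedNorm P v := by rw [weightedNorm_smul hP (sq_nonneg ρ), Real.sqrt_sq hρ]
  set S := toEuclideanCLM (𝕜 := ℝ) (CFC.sqrt Q)
  have hSf : ∀ x ∈ s, HasFDerivWithinAt (fun z => S (f z))
      (S.comp (toEuclideanCLM (𝕜 := ℝ) (A x))) s x :=
    fun x hx => S.hasFDerivAt.comp_hasFDerivWithinAt x (hf x hx)
  rw [weightedNorm, map_sub]
  exact hs.norm_image_sub_le_of_norm_hasFDerivWithin_apply_le (f := fun z => S (f z)) hSf
    (fun x hx => by rw [ContinuousLinearMap.comp_apply]; exact hderiv x hx _) hb ha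

end Matrix

theorem demidovich_implies_local_eis_general
    (n : ℕ) (D₀ : Set (EuclideanSpace ℝ (Fin n)))
    (f : ℕ → EuclideanSpace ℝ (Fin n) → EuclideanSpace ℝ (Fin n))
    (A : ℕ → EuclideanSpace ℝ (Fin n) → Matrix (Fin n) (Fin n) ℝ)
    (P : ℕ → Matrix (Fin n) (Fin n) ℝ)
    (p Pbar ρ : ℝ)
    (hf0 : ∀ k, f k 0 = 0)
    (hD₀open : IsOpen D₀) (h0D₀ : (0 : EuclideanSpace ℝ (Fin n)) ∈ D₀)
    -- the Jacobian of `f k` on `D₀` is the matrix `A k x`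
    (hJ : ∀ k, ∀ x ∈ D₀,
      HasFDerivAt (f k) (Matrix.toEuclideanCLM (𝕜 := ℝ) (A k x)) x)
    (hp : 0 < p) (hpP : p ≤ Pbar)
    (hPlow : ∀ k, (P k - p • (1 : Matrix (Fin n) (Fin n) ℝ)).PosSemidef)
    (hPhigh : ∀ k, (Pbar • (1 : Matrix (Fin n) (Fin n) ℝ) - P k).PosSemidef)
    (hρ : 0 < ρ ∧ ρ < 1)
    -- Demidovich condition: (∂f/∂x)ᵀ P(k+1) (∂f/∂x) − ρ² P(k) ≺ 0 on D₀
    (hDemi : ∀ k, ∀ x ∈ D₀,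
      ((ρ ^ 2) • P k - (A k x)ᵀ * P (k + 1) * A k x).PosDef) :
    ∃ r : ℝ, 0 < r ∧ Metric.closedBall (0 : EuclideanSpace ℝ (Fin n)) r ⊆ D₀ ∧
      ∃ d' : ℝ, 0 < d' ∧
        ∀ (k₀ : ℕ) (x y : ℕ → EuclideanSpace ℝ (Fin n)),
          x k₀ ∈ Metric.closedBall (0 : EuclideanSpace ℝ (Fin n)) r →
          y k₀ ∈ Metric.closedBall (0 : EuclideanSpace ℝ (Fin n)) r →
          (∀ k, k₀ ≤ k → x (k + 1) = f k (x k)) →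
          (∀ k, k₀ ≤ k → y (k + 1) = f k (y k)) →
          (∀ k, k₀ ≤ k → x k ∈ D₀ ∧ y k ∈ D₀) ∧
          (∀ k, k₀ ≤ k → ‖x k - y k‖ ≤ d' * ρ ^ (k - k₀) * ‖x k₀ - y k₀‖) := by
  obtain ⟨hρ0, hρ1⟩ := hρ
  have hPbar : 0 < Pbar := hp.trans_le hpP
  have hPpsd : ∀ k, (P k).PosSemidef := fun k => by
    simpa using (hPlow k).add (PosSemidef.one.smul hp.le)
  obtain ⟨ε, hε, hball⟩ := Metric.isOpen_iff.mp hD₀open 0 h0D₀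
  have hR : Metric.closedBall 0 (ε / 2) ⊆ D₀ :=
    (Metric.closedBall_subset_ball (half_lt_self hε)).trans hball
  have hstep : ∀ k, ∀ a ∈ Metric.closedBall 0 (ε / 2), ∀ b ∈ Metric.closedBall 0 (ε / 2),
      weightedNorm (P (k + 1)) (f k a - f k b) ≤ ρ * weightedNorm (P k) (a - b) :=
    fun k a ha b hb => (convex_closedBall 0 (ε / 2)).weightedNorm_image_sub_le (hPpsd k)
      (hPpsd (k + 1)) hρ0.le (fun x hx => (hJ k x (hR hx)).hasFDerivWithinAt)
      (fun x hx => (hDemi k x (hR hx)).posSemidef) ha hb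
  refine ⟨√p * (ε / 2) / √Pbar, by positivity, ?_, √Pbar / √p, by positivity, ?_⟩
  · refine (Metric.closedBall_subset_closedBall ?_).trans hR
    rw [div_le_iff₀ (by positivity), mul_comm]
    gcongr
  intro k₀ x y hx hy hxf hyf
  obtain ⟨hmem, hbound⟩ := mem_closedBall_and_norm_sub_le_of_contraction (by positivity)
    (by positivity) (by positivity) hρ0.le hρ1.le
    (fun k => mul_norm_le_weightedNorm hp.le (hPlow k))
    (fun k => weightedNorm_le_mul_norm (hPpsd k) hPbar.le (hPhigh k)) hf0 hstep hxf hyf hx hy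
  exact ⟨fun k hk => ⟨hR (hmem k hk).1, hR (hmem k hk).2⟩, hbound⟩

/-- Discrete-time contraction (Demidovich) condition implies local uniform
exponential incremental stability (Theorem 5). -/
theorem demidovich_implies_local_eis
    (n : ℕ) (D D₀ : Set (EuclideanSpace ℝ (Fin n)))
    (f : ℕ → EuclideanSpace ℝ (Fin n) → EuclideanSpace ℝ (Fin n))
    (A : ℕ → EuclideanSpace ℝ (Fin n) → Matrix (Fin n) (Fin n) ℝ)
    (P : ℕ → Matrix (Fin n) (Fin n) ℝ)
    (p Pbar Abar LJ ρ : ℝ)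
    (hD : IsCompact D) (h0D : (0 : EuclideanSpace ℝ (Fin n)) ∈ D)
    (hinv : ∀ k, ∀ x ∈ D, f k x ∈ D)
    (hf0 : ∀ k, f k 0 = 0)
    (hD₀open : IsOpen D₀) (h0D₀ : (0 : EuclideanSpace ℝ (Fin n)) ∈ D₀)
    (hD₀sub : D₀ ⊆ D)
    -- the Jacobian of `f k` on `D₀` is the matrix `A k x`
    (hJ : ∀ k, ∀ x ∈ D₀,
      HasFDerivAt (f k) (Matrix.toEuclideanCLM (𝕜 := ℝ) (A k x)) x)
    (hAbar : 0 < Abar) (hLJ : 0 < LJ)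
    (hJbound : ∀ k, ∀ x ∈ D₀,
      ‖Matrix.toEuclideanCLM (𝕜 := ℝ) (A k x)‖ ≤ Abar)
    (hJLip : ∀ k, ∀ x ∈ D₀, ∀ y ∈ D₀,
      ‖Matrix.toEuclideanCLM (𝕜 := ℝ) (A k x)
        - Matrix.toEuclideanCLM (𝕜 := ℝ) (A k y)‖ ≤ LJ * ‖x - y‖)
    (hPsymm : ∀ k, (P k).IsSymm)
    (hp : 0 < p) (hpP : p ≤ Pbar)
    (hPlow : ∀ k, (P k - p • (1 : Matrix (Fin n) (Fin n) ℝ)).PosSemidef)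
    (hPhigh : ∀ k, (Pbar • (1 : Matrix (Fin n) (Fin n) ℝ) - P k).PosSemidef)
    (hρ : 0 < ρ ∧ ρ < 1)
    -- Demidovich condition: (∂f/∂x)ᵀ P(k+1) (∂f/∂x) − ρ² P(k) ≺ 0 on D₀
    (hDemi : ∀ k, ∀ x ∈ D₀,
      ((ρ ^ 2) • P k - (A k x)ᵀ * P (k + 1) * A k x).PosDef) :
    ∃ r : ℝ, 0 < r ∧ Metric.closedBall (0 : EuclideanSpace ℝ (Fin n)) r ⊆ D₀ ∧
      ∃ d' : ℝ, 0 < d' ∧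
        ∀ (k₀ : ℕ) (x y : ℕ → EuclideanSpace ℝ (Fin n)),
          x k₀ ∈ Metric.closedBall (0 : EuclideanSpace ℝ (Fin n)) r →
          y k₀ ∈ Metric.closedBall (0 : EuclideanSpace ℝ (Fin n)) r →
          (∀ k, k₀ ≤ k → x (k + 1) = f k (x k)) →
          (∀ k, k₀ ≤ k → y (k + 1) = f k (y k)) →
          (∀ k, k₀ ≤ k → x k ∈ D₀ ∧ y k ∈ D₀) ∧
          (∀ k, k₀ ≤ k → ‖x k - y k‖ ≤ d' * ρ ^ (k - k₀) * ‖x k₀ - y k₀‖) :=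
  demidovich_implies_local_eis_general n D₀ f A P p Pbar ρ hf0 hD₀open h0D₀ hJ hp hpP hPlow hPhigh
    hρ hDemi
end

section
/- (Exponential incremental stability implies E-δISS.) Suppose f is uniformly L_f-Lipschitz on D and the system x_{k+1} = f(k, x_k) is uniformly exponentially incrementally stable in D with constants d > 0, λ ∈ (0,1). Then there exist constants c₀, c_w > 0 and ρ ∈ (0,1) such that for every initial time k₀, every unperturbed solution x (x_{k+1} = f(k, x_k)) and every perturbed sequence y (y_{k+1} = f(k, y_k) + w_k for some disturbance w : ℕ → ℝⁿ), provided x_k ∈ D and y_k ∈ D for all k ≥ k₀, one has ‖x_k − y_k‖ ≤ c₀ ρ^{k−k₀} ‖x_{k₀} − y_{k₀}‖ + c_w Σ_{i=k₀}^{k−1} ρ^{k−1−i} ‖w_i‖ for all k ≥ k₀. -/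
private def phiSol {E : Type*} (f : ℕ → E → E) (i : ℕ) (ξ : E) : ℕ → E
  | 0 => ξ
  | k + 1 => if i ≤ k then f k (phiSol f i ξ k) else ξ

private lemma phiSol_init {E : Type*} (f : ℕ → E → E) (i : ℕ) (ξ : E) :
    phiSol f i ξ i = ξ := by
  cases i with
  | zero => simp [phiSol]
  | succ k => simp [phiSol, Nat.not_succ_le_self]

private lemma phiSol_step {E : Type*} (f : ℕ → E → E) (i : ℕ) (ξ : E) {k : ℕ} (h : i ≤ k) :
    phiSol f i ξ (k + 1) = f k (phiSol f i ξ k) := by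
  simp [phiSol, h]

private lemma phiSol_mem {E : Type*} (f : ℕ → E → E) {D : Set E}
    (hinv : ∀ k, ∀ x ∈ D, f k x ∈ D) (i : ℕ) {ξ : E} (hξ : ξ ∈ D) :
    ∀ k, i ≤ k → phiSol f i ξ k ∈ D := by
  intro k hk
  induction k, hk using Nat.le_induction with
  | base => rw [phiSol_init]; exact hξ
  | succ k hk ih => rw [phiSol_step f i ξ hk]; exact hinv k _ ih

private lemma phiSol_shift {E : Type*} (f : ℕ → E → E) (i : ℕ) (ξ : E) :
    ∀ k, i + 1 ≤ k → phiSol f i ξ k = phiSol f (i + 1) (f i ξ) k := by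
  intro k hk
  induction k, hk using Nat.le_induction with
  | base => rw [phiSol_step f i ξ le_rfl, phiSol_init, phiSol_init]
  | succ k hk ih =>
      rw [phiSol_step f i ξ (le_trans (Nat.le_succ i) hk), phiSol_step f (i+1) _ hk, ih]

private lemma tele_sum {E : Type*} [AddCommGroup E] (g : ℕ → E) (k₀ : ℕ) :
    ∀ k, k₀ ≤ k → g k - g k₀ = ∑ j ∈ Finset.Ico k₀ k, (g (j + 1) - g j) := by
  intro k hk
  induction k, hk using Nat.le_induction with
  | base => simp
  | succ k hk ih =>
      rw [Finset.sum_Ico_succ_top hk, ← ih]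
      abel

/-- Exponential incremental stability implies E-δISS (Theorem 7). -/
theorem eis_implies_ediss
    (n : ℕ) (D : Set (EuclideanSpace ℝ (Fin n)))
    (f : ℕ → EuclideanSpace ℝ (Fin n) → EuclideanSpace ℝ (Fin n))
    (Lf d lam : ℝ)
    (hD : IsCompact D) (h0D : (0 : EuclideanSpace ℝ (Fin n)) ∈ D)
    (hinv : ∀ k, ∀ x ∈ D, f k x ∈ D)
    (hLf : 0 < Lf)
    (hLip : ∀ k, ∀ p ∈ D, ∀ q ∈ D, ‖f k p - f k q‖ ≤ Lf * ‖p - q‖)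
    (hd : 0 < d) (hlam : 0 < lam ∧ lam < 1)
    (hEIS : ∀ (k₀ : ℕ) (x y : ℕ → EuclideanSpace ℝ (Fin n)),
      x k₀ ∈ D → y k₀ ∈ D →
      (∀ k, k₀ ≤ k → x (k + 1) = f k (x k)) →
      (∀ k, k₀ ≤ k → y (k + 1) = f k (y k)) →
      ∀ k, k₀ ≤ k → ‖x k - y k‖ ≤ d * ‖x k₀ - y k₀‖ * lam ^ (k - k₀)) :
    ∃ c₀ cw ρ : ℝ, 0 < c₀ ∧ 0 < cw ∧ 0 < ρ ∧ ρ < 1 ∧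
      ∀ (k₀ : ℕ) (x y w : ℕ → EuclideanSpace ℝ (Fin n)),
        (∀ k, k₀ ≤ k → x (k + 1) = f k (x k)) →
        (∀ k, k₀ ≤ k → y (k + 1) = f k (y k) + w k) →
        (∀ k, k₀ ≤ k → x k ∈ D) →
        (∀ k, k₀ ≤ k → y k ∈ D) →
        ∀ k, k₀ ≤ k →
          ‖x k - y k‖ ≤ c₀ * ρ ^ (k - k₀) * ‖x k₀ - y k₀‖
            + cw * ∑ i ∈ Finset.Ico k₀ k, ρ ^ (k - 1 - i) * ‖w i‖ := by
  obtain ⟨hlam0, hlam1⟩ := hlam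
  refine ⟨d, d, lam, hd, hd, hlam0, hlam1, ?_⟩
  intro k₀ x y w hx hy hxD hyD k hk
  -- g j = value at time k of the unperturbed solution started at time j from y j
  set g : ℕ → EuclideanSpace ℝ (Fin n) := fun j => phiSol f j (y j) k with hg
  -- first term: x k vs unperturbed solution from y k₀
  have h1 : ‖x k - g k₀‖ ≤ d * ‖x k₀ - y k₀‖ * lam ^ (k - k₀) := by
    have := hEIS k₀ x (phiSol f k₀ (y k₀)) (hxD k₀ le_rfl)
      (by rw [phiSol_init]; exact hyD k₀ le_rfl)
      hx (fun k hk => phiSol_step f k₀ (y k₀) hk) k hk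
    simpa [hg, phiSol_init] using this
  -- second term: telescoping
  have h2 : ∀ j ∈ Finset.Ico k₀ k, ‖g (j + 1) - g j‖ ≤ d * (lam ^ (k - 1 - j) * ‖w j‖) := by
    intro j hj
    obtain ⟨hj1, hj2⟩ := Finset.mem_Ico.mp hj
    have hshift : g j = phiSol f (j + 1) (f j (y j)) k :=
      phiSol_shift f j (y j) k hj2
    have hEIS' := hEIS (j + 1) (phiSol f (j + 1) (y (j + 1)))
      (phiSol f (j + 1) (f j (y j)))
      (by rw [phiSol_init]; exact hyD (j + 1) (Nat.le_succ_of_le hj1))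
      (by rw [phiSol_init]; exact hinv j (y j) (hyD j hj1))
      (fun k hk => phiSol_step f (j + 1) _ hk)
      (fun k hk => phiSol_step f (j + 1) _ hk) k hj2
    rw [phiSol_init, phiSol_init] at hEIS'
    have hw : y (j + 1) - f j (y j) = w j := by rw [hy j hj1]; abel
    rw [hw] at hEIS'
    have hexp : k - (j + 1) = k - 1 - j := by omega
    rw [hg]
    calc ‖phiSol f (j+1) (y (j+1)) k - phiSol f j (y j) k‖
        = ‖phiSol f (j+1) (y (j+1)) k - phiSol f (j+1) (f j (y j)) k‖ := by
          rw [phiSol_shift f j (y j) k hj2]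
      _ ≤ d * ‖w j‖ * lam ^ (k - (j + 1)) := hEIS'
      _ = d * (lam ^ (k - 1 - j) * ‖w j‖) := by rw [hexp]; ring
  have htel : y k - g k₀ = ∑ j ∈ Finset.Ico k₀ k, (g (j + 1) - g j) := by
    have := tele_sum g k₀ k hk
    rwa [show g k = y k from by rw [hg]; exact phiSol_init f k (y k)] at this
  calc ‖x k - y k‖ = ‖(x k - g k₀) - (y k - g k₀)‖ := by abel_nf
    _ ≤ ‖x k - g k₀‖ + ‖y k - g k₀‖ := norm_sub_le _ _
    _ ≤ d * ‖x k₀ - y k₀‖ * lam ^ (k - k₀)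
        + ∑ j ∈ Finset.Ico k₀ k, ‖g (j + 1) - g j‖ := by
        refine add_le_add h1 ?_
        rw [htel]; exact norm_sum_le _ _
    _ ≤ d * ‖x k₀ - y k₀‖ * lam ^ (k - k₀)
        + ∑ j ∈ Finset.Ico k₀ k, d * (lam ^ (k - 1 - j) * ‖w j‖) :=
        add_le_add le_rfl (Finset.sum_le_sum h2)
    _ = d * lam ^ (k - k₀) * ‖x k₀ - y k₀‖
        + d * ∑ j ∈ Finset.Ico k₀ k, lam ^ (k - 1 - j) * ‖w j‖ := by
        rw [← Finset.mul_sum]; ring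
end

section
/- (Exponential stability implies exponential incremental stability.) Suppose f satisfies the local behavior assumptions and the system x_{k+1} = f(k, x_k) is uniformly exponentially stable in D, i.e. there exist d > 0 and λ ∈ (0,1) such that every solution with x_{k₀} = ξ ∈ D satisfies ‖x_k‖ ≤ d‖ξ‖λ^{k−k₀} for all k ≥ k₀. Then the system is uniformly exponentially incrementally stable in D: there exist d' > 0 and ρ ∈ (0,1) such that any two solutions x, y from initial states ξ, ζ ∈ D at a common initial time k₀ satisfy ‖x_k − y_k‖ ≤ d' ‖ξ − ζ‖ ρ^{k−k₀} for all k ≥ k₀. -/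
/-!
Let `Φ k m` be the `m`-step transition map from time `k`. Near the origin its derivative is the
product of the Jacobians along the trajectory. At the origin that product has norm at most
`d λ ^ m`, because exponential stability bounds `Φ k m` linearly there; since the Jacobians are
Lipschitz, the product stays below `1/2` on a small ball once `d λ ^ N ≤ 1/4`. So `Φ k N` is a
`1/2`-contraction of that ball into itself, uniformly in `k`, which gives incremental stability
with rate `(1/2) ^ (1/N)` on the ball. Exponential stability on the bounded set `D` brings every
trajectory into the ball after a fixed time `T`, and before then the Lipschitz constant of `f`
controls the increments.
-/

open Filter Metric Set Topology

section Transition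

variable {α : Type*}

def stateTransition (f : ℕ → α → α) (k₀ : ℕ) : ℕ → α → α
  | 0 => id
  | m + 1 => fun ξ => f (k₀ + m) (stateTransition f k₀ m ξ)

variable {f : ℕ → α → α}

@[simp]
lemma stateTransition_zero (k₀ : ℕ) (ξ : α) : stateTransition f k₀ 0 ξ = ξ := rfl

lemma stateTransition_succ (k₀ m : ℕ) (ξ : α) :
    stateTransition f k₀ (m + 1) ξ = f (k₀ + m) (stateTransition f k₀ m ξ) := rfl

lemma stateTransition_add (k₀ a b : ℕ) (ξ : α) :
    stateTransition f k₀ (a + b) ξ = stateTransition f (k₀ + a) b (stateTransition f k₀ a ξ) := by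
  induction b with
  | zero => rfl
  | succ b ih => rw [← add_assoc, stateTransition_succ, ih, stateTransition_succ, add_assoc]

lemma stateTransition_sub_succ {k₀ k : ℕ} (hk : k₀ ≤ k) (ξ : α) :
    stateTransition f k₀ (k + 1 - k₀) ξ = f k (stateTransition f k₀ (k - k₀) ξ) := by
  rw [Nat.sub_add_comm hk, stateTransition_succ, Nat.add_sub_cancel' hk]

lemma solution_eq_stateTransition {k₀ : ℕ} {x : ℕ → α}
    (hx : ∀ k, k₀ ≤ k → x (k + 1) = f k (x k)) (m : ℕ) :
    x (k₀ + m) = stateTransition f k₀ m (x k₀) := by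
  induction m with
  | zero => rfl
  | succ m ih => rw [← add_assoc, hx _ (Nat.le_add_right k₀ m), ih, stateTransition_succ]

lemma stateTransition_mem {S : Set α} (hS : ∀ k, MapsTo (f k) S S) {ξ : α} (hξ : ξ ∈ S)
    (k₀ m : ℕ) : stateTransition f k₀ m ξ ∈ S := by
  induction m with
  | zero => exact hξ
  | succ m ih => exact hS _ ih

lemma stateTransition_fixed {ξ : α} (hξ : ∀ k, f k ξ = ξ) (k₀ m : ℕ) :
    stateTransition f k₀ m ξ = ξ := by
  induction m with
  | zero => rfl
  | succ m ih => rw [stateTransition_succ, ih, hξ]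

lemma mapsTo_stateTransition_mul {S : Set α} {N : ℕ}
    (hmaps : ∀ k, MapsTo (stateTransition f k N) S S) (k m : ℕ) :
    MapsTo (stateTransition f k (m * N)) S S := by
  induction m with
  | zero => intro p hp; simpa using hp
  | succ m ih =>
    intro p hp
    rw [Nat.succ_mul, stateTransition_add]
    exact hmaps _ (ih hp)

end Transition

section Bounds

variable {E : Type*} [NormedAddCommGroup E]

def ExpBoundOn (f : ℕ → E → E) (S : Set E) (d lam : ℝ) : Prop :=
  ∀ k₀ m, ∀ ξ ∈ S, ‖stateTransition f k₀ m ξ‖ ≤ d * ‖ξ‖ * lam ^ m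

def IncrExpBoundOn (f : ℕ → E → E) (S : Set E) (K ρ : ℝ) : Prop :=
  ∀ k₀ m, ∀ p ∈ S, ∀ q ∈ S,
    ‖stateTransition f k₀ m p - stateTransition f k₀ m q‖ ≤ K * ‖p - q‖ * ρ ^ m

variable {f : ℕ → E → E} {S T : Set E}

lemma ExpBoundOn.mono {d lam : ℝ} (h : ExpBoundOn f S d lam) (hTS : T ⊆ S) :
    ExpBoundOn f T d lam :=
  fun k₀ m ξ hξ => h k₀ m ξ (hTS hξ)

lemma IncrExpBoundOn.mono {K ρ : ℝ} (h : IncrExpBoundOn f S K ρ) (hTS : T ⊆ S) :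
    IncrExpBoundOn f T K ρ :=
  fun k₀ m p hp q hq => h k₀ m p (hTS hp) q (hTS hq)

lemma expBoundOn_of_solutions {d lam : ℝ}
    (h : ∀ (k₀ : ℕ) (x : ℕ → E), x k₀ ∈ S → (∀ k, k₀ ≤ k → x (k + 1) = f k (x k)) →
      ∀ k, k₀ ≤ k → ‖x k‖ ≤ d * ‖x k₀‖ * lam ^ (k - k₀)) :
    ExpBoundOn f S d lam := by
  intro k₀ m ξ hξ
  simpa using h k₀ (fun k => stateTransition f k₀ (k - k₀) ξ) (by simpa using hξ)
    (fun k hk => stateTransition_sub_succ hk ξ) (k₀ + m) (Nat.le_add_right k₀ m)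

lemma norm_stateTransition_sub_le {L : ℝ} (hL : 0 ≤ L)
    (hf : ∀ k, ∀ p ∈ S, ∀ q ∈ S, ‖f k p - f k q‖ ≤ L * ‖p - q‖) {k₀ : ℕ} {p q : E}
    (hp : ∀ i, stateTransition f k₀ i p ∈ S) (hq : ∀ i, stateTransition f k₀ i q ∈ S)
    (m : ℕ) :
    ‖stateTransition f k₀ m p - stateTransition f k₀ m q‖ ≤ L ^ m * ‖p - q‖ := by
  induction m with
  | zero => simp
  | succ m ih =>
    calc ‖stateTransition f k₀ (m + 1) p - stateTransition f k₀ (m + 1) q‖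
        ≤ L * ‖stateTransition f k₀ m p - stateTransition f k₀ m q‖ := hf _ _ (hp m) _ (hq m)
      _ ≤ L * (L ^ m * ‖p - q‖) := by gcongr
      _ = L ^ (m + 1) * ‖p - q‖ := by ring

lemma incrExpBoundOn_of_lipschitzOn (hS : ∀ k, MapsTo (f k) S S) {L : ℝ} (hL : 0 ≤ L)
    (hf : ∀ k, ∀ p ∈ S, ∀ q ∈ S, ‖f k p - f k q‖ ≤ L * ‖p - q‖) :
    IncrExpBoundOn f S 1 L := fun k₀ m p hp q hq => by
  simpa [mul_comm] using norm_stateTransition_sub_le hL hf (stateTransition_mem hS hp k₀)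
    (stateTransition_mem hS hq k₀) m

end Bounds

section Contraction

variable {E : Type*} [NormedAddCommGroup E] {f : ℕ → E → E} {S V : Set E}

lemma mapsTo_ball_of_contraction (hf0 : ∀ k, f k 0 = 0) {N : ℕ} {c δ : ℝ} (hc : c ≤ 1)
    (hcontr : ∀ k, ∀ p ∈ ball (0 : E) δ, ∀ q ∈ ball (0 : E) δ,
      ‖stateTransition f k N p - stateTransition f k N q‖ ≤ c * ‖p - q‖) (k : ℕ) :
    MapsTo (stateTransition f k N) (ball 0 δ) (ball 0 δ) := by
  intro p hp
  have h0 : (0 : E) ∈ ball 0 δ := mem_ball_self (pos_of_mem_ball hp)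
  have := hcontr k p hp 0 h0
  rw [stateTransition_fixed hf0, sub_zero, sub_zero] at this
  rw [mem_ball_zero_iff] at hp ⊢
  nlinarith [norm_nonneg p]

lemma norm_stateTransition_mul_sub_le {N : ℕ} {c : ℝ} (hc : 0 ≤ c)
    (hmaps : ∀ k, MapsTo (stateTransition f k N) S S)
    (hcontr : ∀ k, ∀ p ∈ S, ∀ q ∈ S,
      ‖stateTransition f k N p - stateTransition f k N q‖ ≤ c * ‖p - q‖) (k m : ℕ) :
    ∀ p ∈ S, ∀ q ∈ S, ‖stateTransition f k (m * N) p - stateTransition f k (m * N) q‖ ≤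
      c ^ m * ‖p - q‖ := by
  induction m with
  | zero => simp
  | succ m ih =>
    intro p hp q hq
    rw [Nat.succ_mul, stateTransition_add, stateTransition_add]
    calc _ ≤ c * ‖stateTransition f k (m * N) p - stateTransition f k (m * N) q‖ :=
          hcontr _ _ (mapsTo_stateTransition_mul hmaps k m hp) _
            (mapsTo_stateTransition_mul hmaps k m hq)
      _ ≤ c * (c ^ m * ‖p - q‖) := by gcongr; exact ih p hp q hq
      _ = c ^ (m + 1) * ‖p - q‖ := by ring

/-- The rate is `c ^ (1 / N)` and the gain `L ^ N / c`. -/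
theorem exists_incrExpBoundOn_of_contraction {N : ℕ} {c L : ℝ} (hN : N ≠ 0) (hc0 : 0 < c)
    (hc1 : c < 1) (hL : 1 ≤ L) (hmaps : ∀ k, MapsTo (stateTransition f k N) S S)
    (hcontr : ∀ k, ∀ p ∈ S, ∀ q ∈ S,
      ‖stateTransition f k N p - stateTransition f k N q‖ ≤ c * ‖p - q‖)
    (hlip : IncrExpBoundOn f S 1 L) :
    ∃ K ρ, 1 ≤ K ∧ 0 < ρ ∧ ρ < 1 ∧ IncrExpBoundOn f S K ρ := by
  set ρ := c ^ (N⁻¹ : ℝ)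
  have hρ0 : 0 < ρ := by positivity
  have hρ1 : ρ < 1 := Real.rpow_lt_one hc0.le hc1 (by positivity)
  have hρN : ρ ^ N = c := Real.rpow_inv_natCast_pow hc0.le hN
  refine ⟨L ^ N / c, ρ, ?_, hρ0, hρ1, fun k j p hp q hq => ?_⟩
  · rw [le_div_iff₀ hc0, one_mul]
    exact hc1.le.trans (one_le_pow₀ hL)
  set m := j / N
  set s := j % N
  have hj : j = m * N + s := (Nat.div_add_mod' j N).symm
  have hcm : c ^ m ≤ ρ ^ j / c := by
    rw [le_div_iff₀ hc0, ← pow_succ, ← hρN, ← pow_mul]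
    refine pow_le_pow_of_le_one hρ0.le hρ1.le ?_
    rw [mul_comm, Nat.succ_mul]
    exact (Nat.lt_div_mul_add (Nat.pos_of_ne_zero hN)).le
  rw [hj, stateTransition_add, stateTransition_add]
  calc _ ≤ 1 * ‖stateTransition f k (m * N) p - stateTransition f k (m * N) q‖ * L ^ s :=
        hlip _ _ _ (mapsTo_stateTransition_mul hmaps k m hp) _
          (mapsTo_stateTransition_mul hmaps k m hq)
    _ ≤ 1 * (c ^ m * ‖p - q‖) * L ^ N := by
        gcongr 1 * ?_ * ?_
        · exact norm_stateTransition_mul_sub_le hc0.le hmaps hcontr k m p hp q hq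
        · exact pow_le_pow_right₀ hL (Nat.mod_lt j (Nat.pos_of_ne_zero hN)).le
    _ ≤ 1 * (ρ ^ j / c * ‖p - q‖) * L ^ N := by gcongr
    _ = L ^ N / c * ‖p - q‖ * ρ ^ (m * N + s) := by rw [← hj]; ring

theorem IncrExpBoundOn.of_mapsTo {K ρ L : ℝ} {T : ℕ} (hV : IncrExpBoundOn f V K ρ) (hK : 1 ≤ K)
    (hρ0 : 0 < ρ) (hρ1 : ρ ≤ 1) (hL : 1 ≤ L) (hmaps : ∀ k, MapsTo (stateTransition f k T) S V)
    (hlip : IncrExpBoundOn f S 1 L) :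
    IncrExpBoundOn f S (K * L ^ T / ρ ^ T) ρ := by
  intro k j p hp q hq
  rcases le_or_gt T j with hTj | hjT
  · obtain ⟨i, rfl⟩ := Nat.exists_eq_add_of_le hTj
    rw [stateTransition_add, stateTransition_add]
    calc _ ≤ K * ‖stateTransition f k T p - stateTransition f k T q‖ * ρ ^ i :=
          hV _ _ _ (hmaps k hp) _ (hmaps k hq)
      _ ≤ K * (1 * ‖p - q‖ * L ^ T) * ρ ^ i := by gcongr; exact hlip k T p hp q hq
      _ = K * L ^ T / ρ ^ T * ‖p - q‖ * ρ ^ (T + i) := by field_simp; ring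
  · calc _ ≤ 1 * ‖p - q‖ * L ^ j := hlip k j p hp q hq
      _ ≤ K * ‖p - q‖ * L ^ T := by gcongr
      _ = K * L ^ T / ρ ^ T * ‖p - q‖ * ρ ^ T := by field_simp
      _ ≤ K * L ^ T / ρ ^ T * ‖p - q‖ * ρ ^ j :=
          mul_le_mul_of_nonneg_left (pow_le_pow_of_le_one hρ0.le hρ1 hjT.le) (by positivity)

lemma exists_mapsTo_ball_of_expBoundOn (hS : Bornology.IsBounded S) {d lam δ : ℝ}
    (hES : ExpBoundOn f S d lam) (hd : 0 ≤ d) (hlam0 : 0 ≤ lam) (hlam1 : lam < 1) (hδ : 0 < δ) :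
    ∃ T, ∀ k, MapsTo (stateTransition f k T) S (ball 0 δ) := by
  obtain ⟨R, hR⟩ := hS.exists_norm_le
  have hlim : Tendsto (fun T => d * R * lam ^ T) atTop (𝓝 0) := by
    simpa using (tendsto_pow_atTop_nhds_zero_of_lt_one hlam0 hlam1).const_mul (d * R)
  obtain ⟨T, hT⟩ := (hlim.eventually_lt_const hδ).exists
  refine ⟨T, fun k ξ hξ => mem_ball_zero_iff.2 ?_⟩
  calc _ ≤ d * ‖ξ‖ * lam ^ T := hES k T ξ hξ
    _ ≤ d * R * lam ^ T := by gcongr; exact hR ξ hξ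
    _ < δ := hT

end Contraction

section Jacobian

variable {E : Type*} [NormedAddCommGroup E] [NormedSpace ℝ E]

noncomputable def jacobianProd (f : ℕ → E → E) (J : ℕ → E → E →L[ℝ] E) (k₀ : ℕ) :
    ℕ → E → E →L[ℝ] E
  | 0, _ => ContinuousLinearMap.id ℝ E
  | m + 1, ξ => (J (k₀ + m) (stateTransition f k₀ m ξ)).comp (jacobianProd f J k₀ m ξ)

variable {f : ℕ → E → E} {J : ℕ → E → E →L[ℝ] E} {U : Set E} {k₀ : ℕ} {ξ ζ : E}

lemma hasFDerivAt_stateTransition (hJ : ∀ k, ∀ x ∈ U, HasFDerivAt (f k) (J k x) x)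
    (hξ : ∀ i, stateTransition f k₀ i ξ ∈ U) (m : ℕ) :
    HasFDerivAt (stateTransition f k₀ m) (jacobianProd f J k₀ m ξ) ξ := by
  induction m with
  | zero => exact hasFDerivAt_id ξ
  | succ m ih => exact (hJ (k₀ + m) _ (hξ m)).comp ξ ih

lemma norm_jacobianProd_le {A : ℝ} (hA : 0 ≤ A) (hJA : ∀ k, ∀ x ∈ U, ‖J k x‖ ≤ A)
    (hξ : ∀ i, stateTransition f k₀ i ξ ∈ U) (m : ℕ) :
    ‖jacobianProd f J k₀ m ξ‖ ≤ A ^ m := by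
  induction m with
  | zero => simpa [jacobianProd] using ContinuousLinearMap.norm_id_le
  | succ m ih =>
    calc _ ≤ ‖J (k₀ + m) (stateTransition f k₀ m ξ)‖ * ‖jacobianProd f J k₀ m ξ‖ :=
          ContinuousLinearMap.opNorm_comp_le _ _
      _ ≤ A * A ^ m := by gcongr; exact hJA _ _ (hξ m)
      _ = A ^ (m + 1) := by ring

lemma norm_jacobianProd_sub_le {A LJ : ℝ} (hA : 1 ≤ A) (hLJ : 0 ≤ LJ)
    (hfA : ∀ k, ∀ p ∈ U, ∀ q ∈ U, ‖f k p - f k q‖ ≤ A * ‖p - q‖)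
    (hJA : ∀ k, ∀ x ∈ U, ‖J k x‖ ≤ A)
    (hJLip : ∀ k, ∀ x ∈ U, ∀ y ∈ U, ‖J k x - J k y‖ ≤ LJ * ‖x - y‖)
    (hξ : ∀ i, stateTransition f k₀ i ξ ∈ U) (hζ : ∀ i, stateTransition f k₀ i ζ ∈ U) (m : ℕ) :
    ‖jacobianProd f J k₀ m ξ - jacobianProd f J k₀ m ζ‖ ≤ m * LJ * A ^ (2 * m) * ‖ξ - ζ‖ := by
  induction m with
  | zero => simp [jacobianProd]
  | succ m ih =>
    set x := stateTransition f k₀ m ξ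
    set y := stateTransition f k₀ m ζ
    have hsplit : jacobianProd f J k₀ (m + 1) ξ - jacobianProd f J k₀ (m + 1) ζ =
        (J (k₀ + m) x - J (k₀ + m) y).comp (jacobianProd f J k₀ m ξ) +
          (J (k₀ + m) y).comp (jacobianProd f J k₀ m ξ - jacobianProd f J k₀ m ζ) := by
      ext v
      simp [jacobianProd, x, y]
    have hxy : ‖J (k₀ + m) x - J (k₀ + m) y‖ ≤ LJ * (A ^ m * ‖ξ - ζ‖) :=
      (hJLip _ _ (hξ m) _ (hζ m)).trans
        (by gcongr; exact norm_stateTransition_sub_le (by linarith) hfA hξ hζ m)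
    have hPξ := norm_jacobianProd_le (by linarith) hJA hξ m
    rw [hsplit]
    calc _ ≤ ‖J (k₀ + m) x - J (k₀ + m) y‖ * ‖jacobianProd f J k₀ m ξ‖ +
          ‖J (k₀ + m) y‖ * ‖jacobianProd f J k₀ m ξ - jacobianProd f J k₀ m ζ‖ :=
          (norm_add_le _ _).trans (add_le_add (ContinuousLinearMap.opNorm_comp_le _ _)
            (ContinuousLinearMap.opNorm_comp_le _ _))
      _ ≤ LJ * (A ^ m * ‖ξ - ζ‖) * A ^ m + A * (m * LJ * A ^ (2 * m) * ‖ξ - ζ‖) := by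
          gcongr
          exact hJA _ _ (hζ m)
      _ = (1 + m * A) * (LJ * A ^ (2 * m) * ‖ξ - ζ‖) := by ring
      _ ≤ (1 + m) * A ^ 2 * (LJ * A ^ (2 * m) * ‖ξ - ζ‖) := by
          have hm : (0 : ℝ) ≤ m := m.cast_nonneg
          gcongr
          nlinarith [mul_nonneg (mul_nonneg hm (zero_le_one.trans hA)) (sub_nonneg.2 hA)]
      _ = (m + 1 : ℕ) * LJ * A ^ (2 * (m + 1)) * ‖ξ - ζ‖ := by push_cast; ring

end Jacobian

section LocalContraction

variable {E : Type*} [NormedAddCommGroup E] [NormedSpace ℝ E]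
  {f : ℕ → E → E} {J : ℕ → E → E →L[ℝ] E} {r d lam : ℝ}

lemma norm_jacobianProd_zero_le (hr : 0 < r) (hf0 : ∀ k, f k 0 = 0)
    (hES : ExpBoundOn f (ball 0 r) d lam) (hd : 0 ≤ d) (hlam : 0 ≤ lam)
    (hJ : ∀ k, ∀ x ∈ ball (0 : E) r, HasFDerivAt (f k) (J k x) x) (k₀ m : ℕ) :
    ‖jacobianProd f J k₀ m 0‖ ≤ d * lam ^ m := by
  have hderiv := hasFDerivAt_stateTransition (k₀ := k₀) hJ
    (fun i => by rw [stateTransition_fixed hf0]; exact mem_ball_self hr) m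
  refine hderiv.le_of_lip' (by positivity) ?_
  filter_upwards [ball_mem_nhds (0 : E) hr] with x hx
  rw [stateTransition_fixed hf0, sub_zero, sub_zero, mul_right_comm]
  exact hES k₀ m x hx

theorem exists_contraction_stateTransition (hr : 0 < r) (hf0 : ∀ k, f k 0 = 0)
    (hES : ExpBoundOn f (ball 0 r) d lam) (hd : 0 ≤ d) (hlam0 : 0 ≤ lam) (hlam1 : lam < 1)
    (hJ : ∀ k, ∀ x ∈ ball (0 : E) r, HasFDerivAt (f k) (J k x) x) {A LJ : ℝ} (hA : 1 ≤ A)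
    (hJA : ∀ k, ∀ x ∈ ball (0 : E) r, ‖J k x‖ ≤ A) (hLJ : 0 ≤ LJ)
    (hJLip : ∀ k, ∀ x ∈ ball (0 : E) r, ∀ y ∈ ball (0 : E) r, ‖J k x - J k y‖ ≤ LJ * ‖x - y‖) :
    ∃ N δ, N ≠ 0 ∧ 0 < δ ∧ δ ≤ r ∧ ∀ k, ∀ p ∈ ball (0 : E) δ, ∀ q ∈ ball (0 : E) δ,
      ‖stateTransition f k N p - stateTransition f k N q‖ ≤ 2⁻¹ * ‖p - q‖ := by
  have hlim : Tendsto (fun N => d * lam ^ N) atTop (𝓝 0) := by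
    simpa using (tendsto_pow_atTop_nhds_zero_of_lt_one hlam0 hlam1).const_mul d
  obtain ⟨N, hNd, hN⟩ :=
    ((hlim.eventually_lt_const (by norm_num : (0 : ℝ) < 4⁻¹)).and (eventually_ne_atTop 0)).exists
  set C : ℝ := N * LJ * A ^ (2 * N)
  have hlin : ∀ a b : ℝ, 0 < b → ∀ᶠ δ in 𝓝 (0 : ℝ), a * δ < b := fun a b hb =>
    ((continuous_const_mul a).tendsto' 0 0 (mul_zero a)).eventually_lt_const hb
  obtain ⟨δ, ⟨hδr, hδd, hδC⟩, hδ⟩ := ((((eventually_lt_nhds hr).and ((hlin d r hr).and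
    (hlin C 4⁻¹ (by norm_num)))).filter_mono nhdsWithin_le_nhds).and
    (self_mem_nhdsWithin : Ioi (0 : ℝ) ∈ 𝓝[>] 0)).exists
  have hstay : ∀ k, ∀ ξ ∈ ball (0 : E) δ, ∀ i, stateTransition f k i ξ ∈ ball (0 : E) r := by
    intro k ξ hξ i
    rw [mem_ball_zero_iff] at hξ ⊢
    calc _ ≤ d * ‖ξ‖ * lam ^ i := hES k i ξ (ball_subset_ball hδr.le (mem_ball_zero_iff.2 hξ))
      _ ≤ d * δ * 1 := by gcongr; exact pow_le_one₀ hlam0 hlam1.le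
      _ < r := by rwa [mul_one]
  have hfA : ∀ k, ∀ p ∈ ball (0 : E) r, ∀ q ∈ ball (0 : E) r, ‖f k p - f k q‖ ≤ A * ‖p - q‖ :=
    fun k p hp q hq => (convex_ball 0 r).norm_image_sub_le_of_norm_hasFDerivWithin_le
      (fun x hx => (hJ k x hx).hasFDerivWithinAt) (hJA k) hq hp
  have hbound : ∀ k, ∀ x ∈ ball (0 : E) δ, ‖jacobianProd f J k N x‖ ≤ 2⁻¹ := by
    intro k x hx
    have h0 : (0 : E) ∈ ball 0 δ := mem_ball_self hδ
    calc _ ≤ ‖jacobianProd f J k N 0‖ + ‖jacobianProd f J k N x - jacobianProd f J k N 0‖ :=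
          norm_le_norm_add_norm_sub' _ _
      _ ≤ d * lam ^ N + C * ‖x - 0‖ := add_le_add
          (norm_jacobianProd_zero_le hr hf0 hES hd hlam0 hJ k N)
          (norm_jacobianProd_sub_le hA hLJ hfA hJA hJLip (hstay k x hx) (hstay k 0 h0) N)
      _ ≤ 4⁻¹ + 4⁻¹ := by
          gcongr
          rw [sub_zero]
          calc C * ‖x‖ ≤ C * δ := by gcongr; exact (mem_ball_zero_iff.1 hx).le
            _ ≤ 4⁻¹ := hδC.le
      _ = 2⁻¹ := by norm_num
  refine ⟨N, δ, hN, hδ, hδr.le, fun k p hp q hq => ?_⟩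
  exact (convex_ball 0 δ).norm_image_sub_le_of_norm_hasFDerivWithin_le
    (fun x hx => (hasFDerivAt_stateTransition hJ (hstay k x hx) N).hasFDerivWithinAt)
    (hbound k) hq hp

end LocalContraction

theorem es_implies_eis_general
    (n : ℕ) (D : Set (EuclideanSpace ℝ (Fin n)))
    (f : ℕ → EuclideanSpace ℝ (Fin n) → EuclideanSpace ℝ (Fin n))
    (Lf d lam r₀ Abar LJ : ℝ)
    (J : ℕ → EuclideanSpace ℝ (Fin n) →
      (EuclideanSpace ℝ (Fin n) →L[ℝ] EuclideanSpace ℝ (Fin n)))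
    (hD : IsCompact D)
    (hinv : ∀ k, ∀ x ∈ D, f k x ∈ D)
    (hf0 : ∀ k, f k 0 = 0)
    (hLip : ∀ k, ∀ p ∈ D, ∀ q ∈ D, ‖f k p - f k q‖ ≤ Lf * ‖p - q‖)
    (hr₀ : 0 < r₀)
    (hball : Metric.ball (0 : EuclideanSpace ℝ (Fin n)) r₀ ⊆ D)
    (hJ : ∀ k, ∀ x ∈ Metric.ball (0 : EuclideanSpace ℝ (Fin n)) r₀,
      HasFDerivAt (f k) (J k x) x)
    (hLJ : 0 < LJ)
    (hJbound : ∀ k, ∀ x ∈ Metric.ball (0 : EuclideanSpace ℝ (Fin n)) r₀,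
      ‖J k x‖ ≤ Abar)
    (hJLip : ∀ k, ∀ x ∈ Metric.ball (0 : EuclideanSpace ℝ (Fin n)) r₀,
      ∀ y ∈ Metric.ball (0 : EuclideanSpace ℝ (Fin n)) r₀,
      ‖J k x - J k y‖ ≤ LJ * ‖x - y‖)
    (hd : 0 < d) (hlam : 0 < lam ∧ lam < 1)
    (hES : ∀ (k₀ : ℕ) (x : ℕ → EuclideanSpace ℝ (Fin n)), x k₀ ∈ D →
      (∀ k, k₀ ≤ k → x (k + 1) = f k (x k)) →
      ∀ k, k₀ ≤ k → ‖x k‖ ≤ d * ‖x k₀‖ * lam ^ (k - k₀)) :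
    ∃ d' ρ : ℝ, 0 < d' ∧ 0 < ρ ∧ ρ < 1 ∧
      ∀ (k₀ : ℕ) (x y : ℕ → EuclideanSpace ℝ (Fin n)),
        x k₀ ∈ D → y k₀ ∈ D →
        (∀ k, k₀ ≤ k → x (k + 1) = f k (x k)) →
        (∀ k, k₀ ≤ k → y (k + 1) = f k (y k)) →
        ∀ k, k₀ ≤ k → ‖x k - y k‖ ≤ d' * ‖x k₀ - y k₀‖ * ρ ^ (k - k₀) := by
  obtain ⟨hlam0, hlam1⟩ := hlam
  have hESD : ExpBoundOn f D d lam := expBoundOn_of_solutions hES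
  set L := max Lf 1
  have hL : 1 ≤ L := le_max_right _ _
  have hLipD : IncrExpBoundOn f D 1 L := incrExpBoundOn_of_lipschitzOn (fun k _ hx => hinv k _ hx)
    (by positivity) fun k p hp q hq => (hLip k p hp q hq).trans (by gcongr; exact le_max_left _ _)
  obtain ⟨N, δ, hN, hδ, hδr, hcontr⟩ := exists_contraction_stateTransition hr₀ hf0
    (hESD.mono hball) hd.le hlam0.le hlam1 hJ (le_max_right Abar 1)
    (fun k x hx => (hJbound k x hx).trans (le_max_left _ _)) hLJ.le hJLip
  have hδD : ball 0 δ ⊆ D := (ball_subset_ball hδr).trans hball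
  obtain ⟨K, ρ, hK, hρ0, hρ1, hloc⟩ := exists_incrExpBoundOn_of_contraction hN (by norm_num)
    (by norm_num) hL (mapsTo_ball_of_contraction hf0 (by norm_num) hcontr) hcontr (hLipD.mono hδD)
  obtain ⟨T, hT⟩ := exists_mapsTo_ball_of_expBoundOn hD.isBounded hESD hd.le hlam0.le hlam1 hδ
  refine ⟨K * L ^ T / ρ ^ T, ρ, by positivity, hρ0, hρ1, fun k₀ x y hx hy hxs hys k hk => ?_⟩
  obtain ⟨m, rfl⟩ := Nat.exists_eq_add_of_le hk
  rw [solution_eq_stateTransition hxs, solution_eq_stateTransition hys, Nat.add_sub_cancel_left]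
  exact hloc.of_mapsTo hK hρ0 hρ1.le hL hT hLipD k₀ m _ hx _ hy

/-- Exponential stability implies exponential incremental stability (Theorem 8). -/
theorem es_implies_eis
    (n : ℕ) (D : Set (EuclideanSpace ℝ (Fin n)))
    (f : ℕ → EuclideanSpace ℝ (Fin n) → EuclideanSpace ℝ (Fin n))
    (Lf d lam r₀ Abar LJ : ℝ)
    (J : ℕ → EuclideanSpace ℝ (Fin n) →
      (EuclideanSpace ℝ (Fin n) →L[ℝ] EuclideanSpace ℝ (Fin n)))
    (hD : IsCompact D) (h0D : (0 : EuclideanSpace ℝ (Fin n)) ∈ D)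
    (hinv : ∀ k, ∀ x ∈ D, f k x ∈ D)
    (hf0 : ∀ k, f k 0 = 0)
    (hLf : 0 < Lf)
    (hLip : ∀ k, ∀ p ∈ D, ∀ q ∈ D, ‖f k p - f k q‖ ≤ Lf * ‖p - q‖)
    (hr₀ : 0 < r₀)
    (hball : Metric.ball (0 : EuclideanSpace ℝ (Fin n)) r₀ ⊆ D)
    (hJ : ∀ k, ∀ x ∈ Metric.ball (0 : EuclideanSpace ℝ (Fin n)) r₀,
      HasFDerivAt (f k) (J k x) x)
    (hAbar : 0 < Abar) (hLJ : 0 < LJ)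
    (hJbound : ∀ k, ∀ x ∈ Metric.ball (0 : EuclideanSpace ℝ (Fin n)) r₀,
      ‖J k x‖ ≤ Abar)
    (hJLip : ∀ k, ∀ x ∈ Metric.ball (0 : EuclideanSpace ℝ (Fin n)) r₀,
      ∀ y ∈ Metric.ball (0 : EuclideanSpace ℝ (Fin n)) r₀,
      ‖J k x - J k y‖ ≤ LJ * ‖x - y‖)
    (hd : 0 < d) (hlam : 0 < lam ∧ lam < 1)
    (hES : ∀ (k₀ : ℕ) (x : ℕ → EuclideanSpace ℝ (Fin n)), x k₀ ∈ D →
      (∀ k, k₀ ≤ k → x (k + 1) = f k (x k)) →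
      ∀ k, k₀ ≤ k → ‖x k‖ ≤ d * ‖x k₀‖ * lam ^ (k - k₀)) :
    ∃ d' ρ : ℝ, 0 < d' ∧ 0 < ρ ∧ ρ < 1 ∧
      ∀ (k₀ : ℕ) (x y : ℕ → EuclideanSpace ℝ (Fin n)),
        x k₀ ∈ D → y k₀ ∈ D →
        (∀ k, k₀ ≤ k → x (k + 1) = f k (x k)) →
        (∀ k, k₀ ≤ k → y (k + 1) = f k (y k)) →
        ∀ k, k₀ ≤ k → ‖x k - y k‖ ≤ d' * ‖x k₀ - y k₀‖ * ρ ^ (k - k₀) :=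
  es_implies_eis_general n D f Lf d lam r₀ Abar LJ J hD hinv hf0 hLip hr₀ hball hJ hLJ hJbound hJLip
    hd hlam hES
end

section
/- (Exponential stability implies E-δISS.) Suppose f satisfies the local behavior assumptions and the system x_{k+1} = f(k, x_k) is uniformly exponentially stable in D (there exist d > 0 and λ ∈ (0,1) such that every solution with x_{k₀} = ξ ∈ D satisfies ‖x_k‖ ≤ d‖ξ‖λ^{k−k₀} for all k ≥ k₀). Then the system is E-δISS in D: there exist constants c₀, c_w > 0 and ρ ∈ (0,1) such that for every initial time k₀, every unperturbed solution x (x_{k+1} = f(k, x_k)) and every perturbed sequence y (y_{k+1} = f(k, y_k) + w_k for some disturbance w : ℕ → ℝⁿ), provided x_k ∈ D and y_k ∈ D for all k ≥ k₀, one has ‖x_k − y_k‖ ≤ c₀ ρ^{k−k₀} ‖x_{k₀} − y_{k₀}‖ + c_w Σ_{i=k₀}^{k−1} ρ^{k−1−i} ‖w_i‖ for all k ≥ k₀. -/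
/-!
Differentiating the exponential-stability estimate at the origin shows that the linearization
along the zero solution obeys the same bound `‖T_m‖ ≤ d λ^m`. Since the Jacobian is Lipschitz,
the `N`-step flow differs from `T_N` on a ball of radius `r` by a map with Lipschitz constant
`O(r)`; choosing `d λ^N ≤ 1/4` and `r` small makes the `N`-step flow a `1/2`-contraction of that
ball into itself. Exponential stability brings all of the compact set `D` into the ball after a
uniform time, so some `T`-step flow is a `1/2`-contraction on all of `D`, and the system is
incrementally exponentially stable. The perturbed sequence `y` is then compared, for each `i`,
with the unperturbed solution through `y i` at time `i`: consecutive ones differ by the flow of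
the single disturbance `w i`, and telescoping gives the E-δISS estimate.
-/

open Filter Topology Metric

namespace Nonautonomous

section Flow

variable {α : Type*}

/-- `flow f k₀ m ξ` is the state at time `k₀ + m` of the solution that starts at `ξ` at time
`k₀`. -/
def flow (f : ℕ → α → α) (k₀ : ℕ) : ℕ → α → α
  | 0, ξ => ξ
  | m + 1, ξ => f (k₀ + m) (flow f k₀ m ξ)

variable {f : ℕ → α → α} {k₀ : ℕ}

@[simp]
lemma flow_zero (ξ : α) : flow f k₀ 0 ξ = ξ := rfl

lemma flow_succ (m : ℕ) (ξ : α) : flow f k₀ (m + 1) ξ = f (k₀ + m) (flow f k₀ m ξ) := rfl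

lemma flow_add (a b : ℕ) (ξ : α) :
    flow f k₀ (a + b) ξ = flow f (k₀ + a) b (flow f k₀ a ξ) := by
  induction b with
  | zero => rfl
  | succ b ih => rw [← add_assoc, flow_succ, ih, flow_succ, add_assoc]

lemma flow_succ' (m : ℕ) (ξ : α) : flow f k₀ (m + 1) ξ = flow f (k₀ + 1) m (f k₀ ξ) := by
  rw [add_comm, flow_add]
  rfl

lemma flow_mem {D : Set α} (hinv : ∀ k, ∀ x ∈ D, f k x ∈ D) (m : ℕ) {ξ : α} (hξ : ξ ∈ D) :
    flow f k₀ m ξ ∈ D := by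
  induction m with
  | zero => exact hξ
  | succ m ih => exact hinv _ _ ih

lemma flow_apply_zero [Zero α] (hf0 : ∀ k, f k 0 = 0) (m : ℕ) : flow f k₀ m 0 = 0 := by
  induction m with
  | zero => rfl
  | succ m ih => rw [flow_succ, ih, hf0]

lemma flow_sub_succ {k : ℕ} (hk : k₀ ≤ k) (ξ : α) :
    flow f k₀ (k + 1 - k₀) ξ = f k (flow f k₀ (k - k₀) ξ) := by
  rw [Nat.sub_add_comm hk, flow_succ, Nat.add_sub_cancel' hk]

lemma eq_flow_of_succ {x : ℕ → α} (hx : ∀ k, k₀ ≤ k → x (k + 1) = f k (x k)) {k : ℕ}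
    (hk : k₀ ≤ k) : x k = flow f k₀ (k - k₀) (x k₀) := by
  induction k, hk using Nat.le_induction with
  | base => simp
  | succ k hk ih => rw [hx k hk, ih, flow_sub_succ hk]

end Flow

section Incremental

variable {E : Type*} [SeminormedAddCommGroup E] {f : ℕ → E → E} {D : Set E}

lemma norm_flow_sub_le (hinv : ∀ k, ∀ x ∈ D, f k x ∈ D) {L : ℝ} (hL : 0 ≤ L)
    (hLip : ∀ k, ∀ p ∈ D, ∀ q ∈ D, ‖f k p - f k q‖ ≤ L * ‖p - q‖) (k₀ m : ℕ) {a b : E}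
    (ha : a ∈ D) (hb : b ∈ D) : ‖flow f k₀ m a - flow f k₀ m b‖ ≤ L ^ m * ‖a - b‖ := by
  induction m with
  | zero => simp
  | succ m ih =>
    calc ‖flow f k₀ (m + 1) a - flow f k₀ (m + 1) b‖
        ≤ L * ‖flow f k₀ m a - flow f k₀ m b‖ :=
          hLip _ _ (flow_mem hinv m ha) _ (flow_mem hinv m hb)
      _ ≤ L * (L ^ m * ‖a - b‖) := by gcongr
      _ = L ^ (m + 1) * ‖a - b‖ := by ring

lemma norm_flow_mul_sub_le {S : Set E} {T : ℕ} {c : ℝ} (hc : 0 ≤ c)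
    (hS : ∀ k₀, ∀ a ∈ S, flow f k₀ T a ∈ S)
    (hcontr : ∀ k₀, ∀ a ∈ S, ∀ b ∈ S, ‖flow f k₀ T a - flow f k₀ T b‖ ≤ c * ‖a - b‖)
    (q k₀ : ℕ) {a b : E} (ha : a ∈ S) (hb : b ∈ S) :
    ‖flow f k₀ (q * T) a - flow f k₀ (q * T) b‖ ≤ c ^ q * ‖a - b‖ := by
  induction q generalizing k₀ a b with
  | zero => simp
  | succ q ih =>
    rw [add_mul, one_mul, add_comm, flow_add, flow_add]
    calc _ ≤ c ^ q * ‖flow f k₀ T a - flow f k₀ T b‖ := ih _ (hS _ a ha) (hS _ b hb)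
      _ ≤ c ^ q * (c * ‖a - b‖) := by gcongr; exact hcontr _ a ha b hb
      _ = c ^ (q + 1) * ‖a - b‖ := by ring

lemma exists_norm_flow_sub_le_of_half_contraction (hinv : ∀ k, ∀ x ∈ D, f k x ∈ D) {L : ℝ}
    (hL : 0 ≤ L) (hLip : ∀ k, ∀ p ∈ D, ∀ q ∈ D, ‖f k p - f k q‖ ≤ L * ‖p - q‖) {T : ℕ}
    (hT : 0 < T)
    (hcontr : ∀ k₀, ∀ a ∈ D, ∀ b ∈ D, ‖flow f k₀ T a - flow f k₀ T b‖ ≤ 2⁻¹ * ‖a - b‖) :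
    ∃ C ρ : ℝ, 0 < C ∧ 0 < ρ ∧ ρ < 1 ∧ ∀ k₀ m, ∀ a ∈ D, ∀ b ∈ D,
      ‖flow f k₀ m a - flow f k₀ m b‖ ≤ C * ρ ^ m * ‖a - b‖ := by
  set ρ : ℝ := (2⁻¹ : ℝ) ^ ((T : ℝ)⁻¹)
  have hρ0 : 0 < ρ := by positivity
  have hρ1 : ρ < 1 := Real.rpow_lt_one (by norm_num) (by norm_num) (by positivity)
  have hρT : ρ ^ T = 2⁻¹ := Real.rpow_inv_natCast_pow (by norm_num) hT.ne'
  refine ⟨2 * max L 1 ^ T, ρ, by positivity, hρ0, hρ1, fun k₀ m a ha b hb => ?_⟩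
  obtain ⟨q, s, hs, rfl⟩ : ∃ q s, s < T ∧ m = q * T + s :=
    ⟨m / T, m % T, Nat.mod_lt _ hT, (Nat.div_add_mod' m T).symm⟩
  have hLs : L ^ s ≤ max L 1 ^ T :=
    (pow_le_pow_left₀ hL (le_max_left L 1) s).trans (pow_le_pow_right₀ (le_max_right L 1) hs.le)
  have hpow : (2⁻¹ : ℝ) ^ q ≤ 2 * ρ ^ (q * T + s) :=
    calc (2⁻¹ : ℝ) ^ q = 2 * ρ ^ (q * T + T) := by rw [pow_add, pow_mul', hρT]; ring
      _ ≤ 2 * ρ ^ (q * T + s) :=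
        mul_le_mul_of_nonneg_left (pow_le_pow_of_le_one hρ0.le hρ1.le (by omega)) (by norm_num)
  calc ‖flow f k₀ (q * T + s) a - flow f k₀ (q * T + s) b‖
      ≤ L ^ s * ‖flow f k₀ (q * T) a - flow f k₀ (q * T) b‖ := by
        rw [flow_add, flow_add]
        exact norm_flow_sub_le hinv hL hLip _ _ (flow_mem hinv _ ha) (flow_mem hinv _ hb)
    _ ≤ max L 1 ^ T * (2⁻¹ ^ q * ‖a - b‖) := by
        gcongr
        exact norm_flow_mul_sub_le (by norm_num) (fun k₀ a ha => flow_mem hinv T ha) hcontr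
          q k₀ ha hb
    _ ≤ max L 1 ^ T * (2 * ρ ^ (q * T + s) * ‖a - b‖) := by gcongr
    _ = 2 * max L 1 ^ T * ρ ^ (q * T + s) * ‖a - b‖ := by ring

theorem norm_sub_le_of_norm_flow_sub_le (hinv : ∀ k, ∀ x ∈ D, f k x ∈ D) {C ρ : ℝ}
    (hδ : ∀ k₀ m, ∀ a ∈ D, ∀ b ∈ D, ‖flow f k₀ m a - flow f k₀ m b‖ ≤ C * ρ ^ m * ‖a - b‖)
    {k₀ : ℕ} {x y w : ℕ → E} (hx : ∀ k, k₀ ≤ k → x (k + 1) = f k (x k))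
    (hy : ∀ k, k₀ ≤ k → y (k + 1) = f k (y k) + w k) (hxD : ∀ k, k₀ ≤ k → x k ∈ D)
    (hyD : ∀ k, k₀ ≤ k → y k ∈ D) {k : ℕ} (hk : k₀ ≤ k) :
    ‖x k - y k‖ ≤ C * ρ ^ (k - k₀) * ‖x k₀ - y k₀‖
      + C * ∑ i ∈ Finset.Ico k₀ k, ρ ^ (k - 1 - i) * ‖w i‖ := by
  -- `ψ i` is the time-`k` value of the unperturbed solution through `y i` at time `i`.
  set ψ : ℕ → E := fun i => flow f i (k - i) (y i)
  have hstep : ∀ i ∈ Finset.Ico k₀ k, ‖ψ (i + 1) - ψ i‖ ≤ C * (ρ ^ (k - 1 - i) * ‖w i‖) := by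
    intro i hi
    obtain ⟨hk₀i, hik⟩ := Finset.mem_Ico.1 hi
    have hψi : ψ i = flow f (i + 1) (k - 1 - i) (f i (y i)) := by
      simp only [ψ]
      rw [show k - i = k - 1 - i + 1 by omega, flow_succ']
    have hψi1 : ψ (i + 1) = flow f (i + 1) (k - 1 - i) (f i (y i) + w i) := by
      simp only [ψ]
      rw [show k - (i + 1) = k - 1 - i by omega, hy i hk₀i]
    have := hδ (i + 1) (k - 1 - i) _ (hy i hk₀i ▸ hyD (i + 1) (by omega)) _
      (hinv i _ (hyD i hk₀i))
    rwa [add_sub_cancel_left, ← hψi, ← hψi1, mul_assoc] at this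
  calc ‖x k - y k‖ = ‖(x k - ψ k₀) - ∑ i ∈ Finset.Ico k₀ k, (ψ (i + 1) - ψ i)‖ := by
        rw [Finset.sum_Ico_sub ψ hk, sub_sub_sub_cancel_right]
        simp [ψ]
    _ ≤ ‖x k - ψ k₀‖ + ∑ i ∈ Finset.Ico k₀ k, ‖ψ (i + 1) - ψ i‖ :=
        (norm_sub_le _ _).trans (by gcongr; exact norm_sum_le _ _)
    _ ≤ C * ρ ^ (k - k₀) * ‖x k₀ - y k₀‖
          + ∑ i ∈ Finset.Ico k₀ k, C * (ρ ^ (k - 1 - i) * ‖w i‖) := by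
        gcongr with i hi
        · rw [eq_flow_of_succ hx hk]
          exact hδ _ _ _ (hxD k₀ le_rfl) _ (hyD k₀ le_rfl)
        · exact hstep i hi
    _ = _ := by rw [Finset.mul_sum]

end Incremental

section Linearization

variable {𝕜 E : Type*} [NontriviallyNormedField 𝕜] [NormedAddCommGroup E] [NormedSpace 𝕜 E]

def linFlow (A : ℕ → E →L[𝕜] E) (k₀ : ℕ) : ℕ → E →L[𝕜] E
  | 0 => ContinuousLinearMap.id 𝕜 E
  | m + 1 => (A (k₀ + m)).comp (linFlow A k₀ m)

lemma hasFDerivAt_flow_zero {f : ℕ → E → E} {A : ℕ → E →L[𝕜] E} (hf0 : ∀ k, f k 0 = 0)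
    (hA : ∀ k, HasFDerivAt (f k) (A k) 0) (k₀ m : ℕ) :
    HasFDerivAt (flow f k₀ m) (linFlow A k₀ m) 0 := by
  induction m with
  | zero => exact hasFDerivAt_id 0
  | succ m ih => exact (flow_apply_zero hf0 m ▸ hA (k₀ + m)).comp 0 ih

lemma norm_linFlow_le {f : ℕ → E → E} {A : ℕ → E →L[𝕜] E} (hf0 : ∀ k, f k 0 = 0)
    (hA : ∀ k, HasFDerivAt (f k) (A k) 0) {k₀ m : ℕ} {M : ℝ} (hM : 0 ≤ M) {U : Set E}
    (hU : U ∈ 𝓝 0) (hbound : ∀ ξ ∈ U, ‖flow f k₀ m ξ‖ ≤ M * ‖ξ‖) : ‖linFlow A k₀ m‖ ≤ M :=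
  (hasFDerivAt_flow_zero hf0 hA k₀ m).le_of_lip' hM <| by
    filter_upwards [hU] with ξ hξ
    simpa [flow_apply_zero hf0] using hbound ξ hξ

end Linearization

section Local

variable {E F : Type*} [NormedAddCommGroup E] [NormedSpace ℝ E] [NormedAddCommGroup F]
  [NormedSpace ℝ F]

lemma norm_sub_sub_le_of_lipschitz_fderiv {g : E → F} {g' : E → E →L[ℝ] F} {r₀ LJ s : ℝ}
    (hg : ∀ x ∈ ball (0 : E) r₀, HasFDerivAt g (g' x) x)
    (hg' : ∀ x ∈ ball (0 : E) r₀, ∀ y ∈ ball (0 : E) r₀, ‖g' x - g' y‖ ≤ LJ * ‖x - y‖)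
    (hLJ : 0 ≤ LJ) (hs : s < r₀) {a b : E} (ha : ‖a‖ ≤ s) (hb : ‖b‖ ≤ s) :
    ‖g a - g b - g' 0 (a - b)‖ ≤ LJ * s * ‖a - b‖ := by
  have hsub : closedBall (0 : E) s ⊆ ball 0 r₀ := closedBall_subset_ball hs
  have h0 : (0 : E) ∈ ball (0 : E) r₀ := hsub (mem_closedBall_self ((norm_nonneg a).trans ha))
  refine (convex_closedBall 0 s).norm_image_sub_le_of_norm_hasFDerivWithin_le'
    (fun x hx => (hg x (hsub hx)).hasFDerivWithinAt) (fun x hx => ?_)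
    (mem_closedBall_zero_iff.2 hb) (mem_closedBall_zero_iff.2 ha)
  calc ‖g' x - g' 0‖ ≤ LJ * ‖x - 0‖ := hg' x (hsub hx) 0 h0
    _ ≤ LJ * s := by
      rw [sub_zero]
      exact mul_le_mul_of_nonneg_left (mem_closedBall_zero_iff.1 hx) hLJ

variable {f : ℕ → E → E} {D : Set E}

lemma exists_norm_flow_sub_sub_linFlow_le (hinv : ∀ k, ∀ x ∈ D, f k x ∈ D) {Lf : ℝ}
    (hLf : 0 ≤ Lf) (hLip : ∀ k, ∀ p ∈ D, ∀ q ∈ D, ‖f k p - f k q‖ ≤ Lf * ‖p - q‖)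
    {J : ℕ → E → E →L[ℝ] E} {r₀ LJ Abar : ℝ}
    (hJ : ∀ k, ∀ x ∈ ball (0 : E) r₀, HasFDerivAt (f k) (J k x) x)
    (hJLip : ∀ k, ∀ x ∈ ball (0 : E) r₀, ∀ y ∈ ball (0 : E) r₀, ‖J k x - J k y‖ ≤ LJ * ‖x - y‖)
    (hLJ : 0 ≤ LJ) (hJ0 : ∀ k, ‖J k 0‖ ≤ Abar) (m : ℕ) :
    ∃ K : ℝ, ∀ k₀ s, s < r₀ → ∀ a ∈ D, ∀ b ∈ D,
      (∀ j, ‖flow f k₀ j a‖ ≤ s) → (∀ j, ‖flow f k₀ j b‖ ≤ s) →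
      ‖flow f k₀ m a - flow f k₀ m b - linFlow (fun k => J k 0) k₀ m (a - b)‖
        ≤ K * s * ‖a - b‖ := by
  induction m with
  | zero => exact ⟨0, fun k₀ s _ a _ b _ _ _ => by simp [linFlow]⟩
  | succ m ih =>
    obtain ⟨K, hK⟩ := ih
    refine ⟨LJ * Lf ^ m + Abar * K, fun k₀ s hs a ha b hb hsa hsb => ?_⟩
    set u := flow f k₀ m a
    set v := flow f k₀ m b
    set A := J (k₀ + m) 0
    have hs0 : 0 ≤ s := (norm_nonneg _).trans (hsa 0)
    have hAbar : 0 ≤ Abar := (norm_nonneg _).trans (hJ0 0)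
    have hsplit : flow f k₀ (m + 1) a - flow f k₀ (m + 1) b
          - linFlow (fun k => J k 0) k₀ (m + 1) (a - b)
        = (f (k₀ + m) u - f (k₀ + m) v - A (u - v))
          + A (u - v - linFlow (fun k => J k 0) k₀ m (a - b)) := by
      simp only [flow_succ, linFlow, ContinuousLinearMap.comp_apply, map_sub, u, v, A]
      abel
    calc _ ≤ LJ * s * ‖u - v‖ + Abar * (K * s * ‖a - b‖) := by
          rw [hsplit]
          refine norm_add_le_of_le
            (norm_sub_sub_le_of_lipschitz_fderiv (hJ _) (hJLip _) hLJ hs (hsa m) (hsb m)) ?_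
          exact (A.le_opNorm _).trans
            (mul_le_mul (hJ0 _) (hK k₀ s hs a ha b hb hsa hsb) (norm_nonneg _) hAbar)
      _ ≤ LJ * s * (Lf ^ m * ‖a - b‖) + Abar * (K * s * ‖a - b‖) := by
          gcongr
          exact norm_flow_sub_le hinv hLf hLip k₀ m ha hb
      _ = (LJ * Lf ^ m + Abar * K) * s * ‖a - b‖ := by ring

lemma exists_local_half_contraction (hinv : ∀ k, ∀ x ∈ D, f k x ∈ D) {Lf : ℝ}
    (hLf : 0 ≤ Lf) (hLip : ∀ k, ∀ p ∈ D, ∀ q ∈ D, ‖f k p - f k q‖ ≤ Lf * ‖p - q‖)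
    {r₀ : ℝ} (hr₀ : 0 < r₀) (hball : ball (0 : E) r₀ ⊆ D) (hf0 : ∀ k, f k 0 = 0)
    {J : ℕ → E → E →L[ℝ] E} {LJ Abar : ℝ}
    (hJ : ∀ k, ∀ x ∈ ball (0 : E) r₀, HasFDerivAt (f k) (J k x) x)
    (hJLip : ∀ k, ∀ x ∈ ball (0 : E) r₀, ∀ y ∈ ball (0 : E) r₀, ‖J k x - J k y‖ ≤ LJ * ‖x - y‖)
    (hLJ : 0 ≤ LJ) (hJ0 : ∀ k, ‖J k 0‖ ≤ Abar) {d lam : ℝ} (hd : 0 ≤ d) (hlam0 : 0 ≤ lam)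
    (hlam1 : lam < 1) (hES : ∀ k₀ m, ∀ ξ ∈ D, ‖flow f k₀ m ξ‖ ≤ d * ‖ξ‖ * lam ^ m) :
    ∃ N r, 0 < N ∧ 0 < r ∧ (∀ k₀, ∀ a ∈ D ∩ closedBall 0 r, flow f k₀ N a ∈ D ∩ closedBall 0 r) ∧
      ∀ k₀, ∀ a ∈ D ∩ closedBall 0 r, ∀ b ∈ D ∩ closedBall 0 r,
        ‖flow f k₀ N a - flow f k₀ N b‖ ≤ 2⁻¹ * ‖a - b‖ := by
  obtain ⟨N, hN, hN0⟩ : ∃ N, d * lam ^ N < 4⁻¹ ∧ 0 < N :=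
    ((((tendsto_pow_atTop_nhds_zero_of_lt_one hlam0 hlam1).const_mul d).eventually
      (gt_mem_nhds (by norm_num))).and (eventually_gt_atTop 0)).exists
  obtain ⟨K, hK⟩ := exists_norm_flow_sub_sub_linFlow_le hinv hLf hLip hJ hJLip hLJ hJ0 N
  obtain ⟨r, ⟨hdr, hKr⟩, hr⟩ : ∃ r, (d * r < r₀ ∧ K * (d * r) < 4⁻¹) ∧ 0 < r := by
    have hdr : Tendsto (fun r : ℝ => d * r) (𝓝 0) (𝓝 0) := by
      simpa using (tendsto_id (x := 𝓝 (0 : ℝ))).const_mul d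
    have hev := (hdr.eventually (gt_mem_nhds hr₀)).and
      ((hdr.const_mul K).eventually (gt_mem_nhds (show K * 0 < 4⁻¹ by norm_num)))
    exact ((hev.filter_mono (nhdsWithin_le_nhds (s := Set.Ioi 0))).and self_mem_nhdsWithin).exists
  have hstay : ∀ k₀ j, ∀ a ∈ D ∩ closedBall 0 r, ‖flow f k₀ j a‖ ≤ d * r := by
    rintro k₀ j a ⟨ha, har⟩
    calc ‖flow f k₀ j a‖ ≤ d * ‖a‖ * lam ^ j := hES k₀ j a ha
      _ ≤ d * r * 1 := by
        gcongr
        exacts [mem_closedBall_zero_iff.1 har, pow_le_one₀ hlam0 hlam1.le]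
      _ = d * r := mul_one _
  have hlin : ∀ k₀, ‖linFlow (fun k => J k 0) k₀ N‖ ≤ d * lam ^ N := fun k₀ =>
    norm_linFlow_le hf0 (fun k => hJ k 0 (mem_ball_self hr₀)) (by positivity)
      (ball_mem_nhds 0 hr₀) fun ξ hξ => by linarith [hES k₀ N ξ (hball hξ)]
  refine ⟨N, r, hN0, hr, fun k₀ a ha => ⟨flow_mem hinv N ha.1, ?_⟩, fun k₀ a ha b hb => ?_⟩
  · rw [mem_closedBall_zero_iff]
    calc ‖flow f k₀ N a‖ ≤ d * lam ^ N * ‖a‖ := by linarith [hES k₀ N a ha.1]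
      _ ≤ 4⁻¹ * r := by gcongr; exact mem_closedBall_zero_iff.1 ha.2
      _ ≤ r := by linarith
  calc ‖flow f k₀ N a - flow f k₀ N b‖
      ≤ ‖linFlow (fun k => J k 0) k₀ N (a - b)‖
        + ‖flow f k₀ N a - flow f k₀ N b - linFlow (fun k => J k 0) k₀ N (a - b)‖ :=
        norm_le_insert' _ _
    _ ≤ d * lam ^ N * ‖a - b‖ + K * (d * r) * ‖a - b‖ := by
        gcongr
        · exact (ContinuousLinearMap.le_opNorm _ _).trans (by gcongr; exact hlin k₀)
        · exact hK k₀ (d * r) hdr a ha.1 b hb.1 (fun j => hstay k₀ j a ha)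
            (fun j => hstay k₀ j b hb)
    _ ≤ 2⁻¹ * ‖a - b‖ := by
        rw [← add_mul]
        gcongr
        linarith

end Local

section Global

variable {E : Type*} [SeminormedAddCommGroup E] {f : ℕ → E → E} {D : Set E}

lemma exists_half_contraction_of_local (hinv : ∀ k, ∀ x ∈ D, f k x ∈ D) {Lf : ℝ}
    (hLf : 0 ≤ Lf) (hLip : ∀ k, ∀ p ∈ D, ∀ q ∈ D, ‖f k p - f k q‖ ≤ Lf * ‖p - q‖) {R : ℝ}
    (hR : ∀ x ∈ D, ‖x‖ ≤ R) {d lam : ℝ} (hd : 0 ≤ d) (hlam0 : 0 ≤ lam) (hlam1 : lam < 1)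
    (hES : ∀ k₀ m, ∀ ξ ∈ D, ‖flow f k₀ m ξ‖ ≤ d * ‖ξ‖ * lam ^ m) {N : ℕ} {r : ℝ} (hN : 0 < N)
    (hr : 0 < r) (hmaps : ∀ k₀, ∀ a ∈ D ∩ closedBall 0 r, flow f k₀ N a ∈ D ∩ closedBall 0 r)
    (hcontr : ∀ k₀, ∀ a ∈ D ∩ closedBall 0 r, ∀ b ∈ D ∩ closedBall 0 r,
      ‖flow f k₀ N a - flow f k₀ N b‖ ≤ 2⁻¹ * ‖a - b‖) :
    ∃ T, 0 < T ∧ ∀ k₀, ∀ a ∈ D, ∀ b ∈ D, ‖flow f k₀ T a - flow f k₀ T b‖ ≤ 2⁻¹ * ‖a - b‖ := by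
  obtain ⟨N₀, hN₀⟩ : ∃ N₀, d * lam ^ N₀ * R < r :=
    ((((tendsto_pow_atTop_nhds_zero_of_lt_one hlam0 hlam1).const_mul d).mul_const R).eventually
      (gt_mem_nhds (by simpa using hr))).exists
  have hentry : ∀ k₀, ∀ a ∈ D, flow f k₀ N₀ a ∈ D ∩ closedBall 0 r := fun k₀ a ha =>
    ⟨flow_mem hinv N₀ ha, mem_closedBall_zero_iff.2 <| by
      calc ‖flow f k₀ N₀ a‖ ≤ d * ‖a‖ * lam ^ N₀ := hES k₀ N₀ a ha
        _ = d * lam ^ N₀ * ‖a‖ := by ring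
        _ ≤ d * lam ^ N₀ * R := by gcongr; exact hR a ha
        _ ≤ r := hN₀.le⟩
  obtain ⟨q, hq, hq0⟩ : ∃ q, (2⁻¹ : ℝ) ^ q * Lf ^ N₀ < 2⁻¹ ∧ 0 < q :=
    ((((tendsto_pow_atTop_nhds_zero_of_lt_one (by norm_num) (by norm_num)).mul_const
      (Lf ^ N₀)).eventually (gt_mem_nhds (by norm_num))).and (eventually_gt_atTop 0)).exists
  refine ⟨N₀ + q * N, Nat.add_pos_right _ (Nat.mul_pos hq0 hN), fun k₀ a ha b hb => ?_⟩
  rw [flow_add, flow_add]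
  calc _ ≤ 2⁻¹ ^ q * ‖flow f k₀ N₀ a - flow f k₀ N₀ b‖ :=
        norm_flow_mul_sub_le (by norm_num) hmaps hcontr q _ (hentry k₀ a ha) (hentry k₀ b hb)
    _ ≤ 2⁻¹ ^ q * (Lf ^ N₀ * ‖a - b‖) := by
        gcongr
        exact norm_flow_sub_le hinv hLf hLip k₀ N₀ ha hb
    _ ≤ 2⁻¹ * ‖a - b‖ := by
        rw [← mul_assoc]
        gcongr

end Global

end Nonautonomous

open Nonautonomous in
theorem es_implies_ediss_general
    (n : ℕ) (D : Set (EuclideanSpace ℝ (Fin n)))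
    (f : ℕ → EuclideanSpace ℝ (Fin n) → EuclideanSpace ℝ (Fin n))
    (Lf d lam r₀ Abar LJ : ℝ)
    (J : ℕ → EuclideanSpace ℝ (Fin n) →
      (EuclideanSpace ℝ (Fin n) →L[ℝ] EuclideanSpace ℝ (Fin n)))
    (hD : IsCompact D)
    (hinv : ∀ k, ∀ x ∈ D, f k x ∈ D)
    (hf0 : ∀ k, f k 0 = 0)
    (hLf : 0 < Lf)
    (hLip : ∀ k, ∀ p ∈ D, ∀ q ∈ D, ‖f k p - f k q‖ ≤ Lf * ‖p - q‖)
    (hr₀ : 0 < r₀)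
    (hball : Metric.ball (0 : EuclideanSpace ℝ (Fin n)) r₀ ⊆ D)
    (hJ : ∀ k, ∀ x ∈ Metric.ball (0 : EuclideanSpace ℝ (Fin n)) r₀,
      HasFDerivAt (f k) (J k x) x)
    (hLJ : 0 < LJ)
    (hJbound : ∀ k, ∀ x ∈ Metric.ball (0 : EuclideanSpace ℝ (Fin n)) r₀,
      ‖J k x‖ ≤ Abar)
    (hJLip : ∀ k, ∀ x ∈ Metric.ball (0 : EuclideanSpace ℝ (Fin n)) r₀,
      ∀ y ∈ Metric.ball (0 : EuclideanSpace ℝ (Fin n)) r₀,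
      ‖J k x - J k y‖ ≤ LJ * ‖x - y‖)
    (hd : 0 < d) (hlam : 0 < lam ∧ lam < 1)
    (hES : ∀ (k₀ : ℕ) (x : ℕ → EuclideanSpace ℝ (Fin n)), x k₀ ∈ D →
      (∀ k, k₀ ≤ k → x (k + 1) = f k (x k)) →
      ∀ k, k₀ ≤ k → ‖x k‖ ≤ d * ‖x k₀‖ * lam ^ (k - k₀)) :
    ∃ c₀ cw ρ : ℝ, 0 < c₀ ∧ 0 < cw ∧ 0 < ρ ∧ ρ < 1 ∧
      ∀ (k₀ : ℕ) (x y w : ℕ → EuclideanSpace ℝ (Fin n)),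
        (∀ k, k₀ ≤ k → x (k + 1) = f k (x k)) →
        (∀ k, k₀ ≤ k → y (k + 1) = f k (y k) + w k) →
        (∀ k, k₀ ≤ k → x k ∈ D) →
        (∀ k, k₀ ≤ k → y k ∈ D) →
        ∀ k, k₀ ≤ k →
          ‖x k - y k‖ ≤ c₀ * ρ ^ (k - k₀) * ‖x k₀ - y k₀‖
            + cw * ∑ i ∈ Finset.Ico k₀ k, ρ ^ (k - 1 - i) * ‖w i‖ := by
  have hESflow : ∀ k₀ m, ∀ ξ ∈ D, ‖flow f k₀ m ξ‖ ≤ d * ‖ξ‖ * lam ^ m := fun k₀ m ξ hξ => by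
    simpa using hES k₀ (fun k => flow f k₀ (k - k₀) ξ) (by simpa using hξ)
      (fun k hk => flow_sub_succ hk ξ) (k₀ + m) (by omega)
  obtain ⟨R, hR⟩ := hD.isBounded.exists_norm_le
  obtain ⟨N, r, hN, hr, hmaps, hlocal⟩ := exists_local_half_contraction hinv hLf.le hLip hr₀
    hball hf0 hJ hJLip hLJ.le (fun k => hJbound k 0 (Metric.mem_ball_self hr₀)) hd.le hlam.1.le
    hlam.2 hESflow
  obtain ⟨T, hT, hglobal⟩ := exists_half_contraction_of_local hinv hLf.le hLip hR hd.le
    hlam.1.le hlam.2 hESflow hN hr hmaps hlocal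
  obtain ⟨C, ρ, hC, hρ0, hρ1, hδ⟩ :=
    exists_norm_flow_sub_le_of_half_contraction hinv hLf.le hLip hT hglobal
  exact ⟨C, C, ρ, hC, hC, hρ0, hρ1, fun k₀ x y w hx hy hxD hyD k hk =>
    norm_sub_le_of_norm_flow_sub_le hinv hδ hx hy hxD hyD hk⟩

/-- Exponential stability implies E-δISS (Corollary 2). -/
theorem es_implies_ediss
    (n : ℕ) (D : Set (EuclideanSpace ℝ (Fin n)))
    (f : ℕ → EuclideanSpace ℝ (Fin n) → EuclideanSpace ℝ (Fin n))
    (Lf d lam r₀ Abar LJ : ℝ)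
    (J : ℕ → EuclideanSpace ℝ (Fin n) →
      (EuclideanSpace ℝ (Fin n) →L[ℝ] EuclideanSpace ℝ (Fin n)))
    (hD : IsCompact D) (h0D : (0 : EuclideanSpace ℝ (Fin n)) ∈ D)
    (hinv : ∀ k, ∀ x ∈ D, f k x ∈ D)
    (hf0 : ∀ k, f k 0 = 0)
    (hLf : 0 < Lf)
    (hLip : ∀ k, ∀ p ∈ D, ∀ q ∈ D, ‖f k p - f k q‖ ≤ Lf * ‖p - q‖)
    (hr₀ : 0 < r₀)
    (hball : Metric.ball (0 : EuclideanSpace ℝ (Fin n)) r₀ ⊆ D)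
    (hJ : ∀ k, ∀ x ∈ Metric.ball (0 : EuclideanSpace ℝ (Fin n)) r₀,
      HasFDerivAt (f k) (J k x) x)
    (hAbar : 0 < Abar) (hLJ : 0 < LJ)
    (hJbound : ∀ k, ∀ x ∈ Metric.ball (0 : EuclideanSpace ℝ (Fin n)) r₀,
      ‖J k x‖ ≤ Abar)
    (hJLip : ∀ k, ∀ x ∈ Metric.ball (0 : EuclideanSpace ℝ (Fin n)) r₀,
      ∀ y ∈ Metric.ball (0 : EuclideanSpace ℝ (Fin n)) r₀,
      ‖J k x - J k y‖ ≤ LJ * ‖x - y‖)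
    (hd : 0 < d) (hlam : 0 < lam ∧ lam < 1)
    (hES : ∀ (k₀ : ℕ) (x : ℕ → EuclideanSpace ℝ (Fin n)), x k₀ ∈ D →
      (∀ k, k₀ ≤ k → x (k + 1) = f k (x k)) →
      ∀ k, k₀ ≤ k → ‖x k‖ ≤ d * ‖x k₀‖ * lam ^ (k - k₀)) :
    ∃ c₀ cw ρ : ℝ, 0 < c₀ ∧ 0 < cw ∧ 0 < ρ ∧ ρ < 1 ∧
      ∀ (k₀ : ℕ) (x y w : ℕ → EuclideanSpace ℝ (Fin n)),
        (∀ k, k₀ ≤ k → x (k + 1) = f k (x k)) →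
        (∀ k, k₀ ≤ k → y (k + 1) = f k (y k) + w k) →
        (∀ k, k₀ ≤ k → x k ∈ D) →
        (∀ k, k₀ ≤ k → y k ∈ D) →
        ∀ k, k₀ ≤ k →
          ‖x k - y k‖ ≤ c₀ * ρ ^ (k - k₀) * ‖x k₀ - y k₀‖
            + cw * ∑ i ∈ Finset.Ico k₀ k, ρ ^ (k - 1 - i) * ‖w i‖ :=
  es_implies_ediss_general n D f Lf d lam r₀ Abar LJ J hD hinv hf0 hLf hLip hr₀ hball hJ hLJ hJbound
    hJLip hd hlam hES
end

section
/- (Stability of the linearization at the origin.) Suppose f satisfies the local behavior assumptions and the system x_{k+1} = f(k, x_k) is uniformly exponentially stable in D (there exist d > 0 and λ ∈ (0,1) such that every solution with x_{k₀} = ξ ∈ D satisfies ‖x_k‖ ≤ d‖ξ‖λ^{k−k₀} for all k ≥ k₀). Define A(k) := (∂f/∂x)(k, 0), the Jacobian of f(k, ·) at the origin. Then the linear time-varying system z_{k+1} = A(k) z_k is uniformly exponentially stable: there exist d_A > 0 and λ_A ∈ (0,1) such that for every k₀, every k ≥ k₀ and every ξ ∈ ℝⁿ, ‖A(k−1) A(k−2)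 ⋯ A(k₀) ξ‖ ≤ d_A λ_A^{k−k₀} ‖ξ‖. -/
/-!
The `m`-step map `ξ ↦ x_{k₀+m}` of the nonlinear system fixes the origin and, by the chain rule,
has derivative `A (k₀+m-1) ⋯ A k₀` there. Exponential stability bounds this map by
`d * lam ^ m * ‖ξ‖` on a neighbourhood of the origin, and a derivative at a fixed point is bounded
in operator norm by any such linear growth bound. Hence the linearization is uniformly
exponentially stable, with the same constants `d` and `lam`.
-/

section Flow

variable {α : Type*}

def flow (f : ℕ → α → α) (k₀ : ℕ) : ℕ → α → α
  | 0 => id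
  | m + 1 => f (k₀ + m) ∘ flow f k₀ m

theorem flow_zero_apply (f : ℕ → α → α) (k₀ : ℕ) (ξ : α) : flow f k₀ 0 ξ = ξ := rfl

theorem flow_succ_apply (f : ℕ → α → α) (k₀ m : ℕ) (ξ : α) :
    flow f k₀ (m + 1) ξ = f (k₀ + m) (flow f k₀ m ξ) := rfl

theorem flow_apply_of_forall_eq {f : ℕ → α → α} {p : α} (hp : ∀ k, f k p = p) (k₀ m : ℕ) :
    flow f k₀ m p = p := by
  induction m with
  | zero => rfl
  | succ m ih => rw [flow_succ_apply, ih, hp]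

theorem flow_succ_sub_apply (f : ℕ → α → α) (k₀ : ℕ) (ξ : α) (k : ℕ) (hk : k₀ ≤ k) :
    flow f k₀ (k + 1 - k₀) ξ = f k (flow f k₀ (k - k₀) ξ) := by
  obtain ⟨m, rfl⟩ := Nat.exists_eq_add_of_le hk
  rw [Nat.add_assoc, Nat.add_sub_cancel_left, Nat.add_sub_cancel_left, flow_succ_apply]

theorem eq_flow_of_solution {f : ℕ → α → α} {k₀ : ℕ} {x : ℕ → α}
    (hx : ∀ k, k₀ ≤ k → x (k + 1) = f k (x k)) (m : ℕ) :
    x (k₀ + m) = flow f k₀ m (x k₀) := by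
  induction m with
  | zero => rfl
  | succ m ih => rw [← Nat.add_assoc, hx _ (Nat.le_add_right _ _), ih, flow_succ_apply]

end Flow

section Transition

variable {𝕜 E : Type*} [NontriviallyNormedField 𝕜] [NormedAddCommGroup E] [NormedSpace 𝕜 E]

def transition (A : ℕ → E →L[𝕜] E) (k₀ : ℕ) : ℕ → E →L[𝕜] E
  | 0 => ContinuousLinearMap.id 𝕜 E
  | m + 1 => (A (k₀ + m)).comp (transition A k₀ m)

theorem coe_transition (A : ℕ → E →L[𝕜] E) (k₀ m : ℕ) :
    ⇑(transition A k₀ m) = flow (fun k => ⇑(A k)) k₀ m := by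
  induction m with
  | zero => rfl
  | succ m ih => simp only [transition, flow, ContinuousLinearMap.coe_comp, ih]

theorem eq_transition_of_solution {A : ℕ → E →L[𝕜] E} {k₀ : ℕ} {z : ℕ → E}
    (hz : ∀ k, k₀ ≤ k → z (k + 1) = A k (z k)) (m : ℕ) :
    z (k₀ + m) = transition A k₀ m (z k₀) := by
  rw [coe_transition]
  exact eq_flow_of_solution hz m

theorem hasFDerivAt_flow {f : ℕ → E → E} {A : ℕ → E →L[𝕜] E} {p : E} (hp : ∀ k, f k p = p)
    (hA : ∀ k, HasFDerivAt (f k) (A k) p) (k₀ m : ℕ) :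
    HasFDerivAt (flow f k₀ m) (transition A k₀ m) p := by
  induction m with
  | zero => exact hasFDerivAt_id p
  | succ m ih =>
    refine HasFDerivAt.comp p ?_ ih
    rw [flow_apply_of_forall_eq hp]
    exact hA (k₀ + m)

end Transition

theorem linearization_uniformly_exponentially_stable_general
    (n : ℕ) (D : Set (EuclideanSpace ℝ (Fin n)))
    (f : ℕ → EuclideanSpace ℝ (Fin n) → EuclideanSpace ℝ (Fin n))
    (d lam r₀ : ℝ)
    (J : ℕ → EuclideanSpace ℝ (Fin n) →
      (EuclideanSpace ℝ (Fin n) →L[ℝ] EuclideanSpace ℝ (Fin n)))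
    (hf0 : ∀ k, f k 0 = 0)
    (hr₀ : 0 < r₀)
    (hball : Metric.ball (0 : EuclideanSpace ℝ (Fin n)) r₀ ⊆ D)
    (hJ : ∀ k, ∀ x ∈ Metric.ball (0 : EuclideanSpace ℝ (Fin n)) r₀,
      HasFDerivAt (f k) (J k x) x)
    (hd : 0 < d) (hlam : 0 < lam ∧ lam < 1)
    (hES : ∀ (k₀ : ℕ) (x : ℕ → EuclideanSpace ℝ (Fin n)), x k₀ ∈ D →
      (∀ k, k₀ ≤ k → x (k + 1) = f k (x k)) →
      ∀ k, k₀ ≤ k → ‖x k‖ ≤ d * ‖x k₀‖ * lam ^ (k - k₀)) :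
    ∃ dA lamA : ℝ, 0 < dA ∧ 0 < lamA ∧ lamA < 1 ∧
      ∀ (k₀ : ℕ) (z : ℕ → EuclideanSpace ℝ (Fin n)),
        (∀ k, k₀ ≤ k → z (k + 1) = J k 0 (z k)) →
        ∀ k, k₀ ≤ k → ‖z k‖ ≤ dA * lamA ^ (k - k₀) * ‖z k₀‖ := by
  refine ⟨d, lam, hd, hlam.1, hlam.2, fun k₀ z hz k hk => ?_⟩
  obtain ⟨m, rfl⟩ := Nat.exists_eq_add_of_le hk
  have hflow : ∀ ξ ∈ D, ‖flow f k₀ m ξ‖ ≤ d * lam ^ m * ‖ξ‖ := fun ξ hξ => by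
    have h := hES k₀ (fun k => flow f k₀ (k - k₀) ξ) (by rwa [Nat.sub_self, flow_zero_apply])
      (flow_succ_sub_apply f k₀ ξ) (k₀ + m) (Nat.le_add_right _ _)
    simp only [Nat.add_sub_cancel_left, Nat.sub_self, flow_zero_apply] at h
    linarith
  have htransition : ‖transition (fun k => J k 0) k₀ m‖ ≤ d * lam ^ m := by
    refine (hasFDerivAt_flow hf0 (fun k => hJ k 0 (Metric.mem_ball_self hr₀)) k₀ m).le_of_lip'
      (by have := hlam.1; positivity) ?_
    filter_upwards [Metric.ball_mem_nhds 0 hr₀] with ξ hξ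
    rw [flow_apply_of_forall_eq hf0, sub_zero, sub_zero]
    exact hflow ξ (hball hξ)
  rw [eq_transition_of_solution hz, Nat.add_sub_cancel_left]
  exact (ContinuousLinearMap.le_opNorm _ _).trans
    (mul_le_mul_of_nonneg_right htransition (norm_nonneg _))

/-- Uniform exponential stability of the linearization at the origin. -/
theorem linearization_uniformly_exponentially_stable
    (n : ℕ) (D : Set (EuclideanSpace ℝ (Fin n)))
    (f : ℕ → EuclideanSpace ℝ (Fin n) → EuclideanSpace ℝ (Fin n))
    (Lf d lam r₀ Abar LJ : ℝ)
    (J : ℕ → EuclideanSpace ℝ (Fin n) →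
      (EuclideanSpace ℝ (Fin n) →L[ℝ] EuclideanSpace ℝ (Fin n)))
    (hD : IsCompact D) (h0D : (0 : EuclideanSpace ℝ (Fin n)) ∈ D)
    (hinv : ∀ k, ∀ x ∈ D, f k x ∈ D)
    (hf0 : ∀ k, f k 0 = 0)
    (hLf : 0 < Lf)
    (hLip : ∀ k, ∀ p ∈ D, ∀ q ∈ D, ‖f k p - f k q‖ ≤ Lf * ‖p - q‖)
    (hr₀ : 0 < r₀)
    (hball : Metric.ball (0 : EuclideanSpace ℝ (Fin n)) r₀ ⊆ D)
    (hJ : ∀ k, ∀ x ∈ Metric.ball (0 : EuclideanSpace ℝ (Fin n)) r₀,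
      HasFDerivAt (f k) (J k x) x)
    (hAbar : 0 < Abar) (hLJ : 0 < LJ)
    (hJbound : ∀ k, ∀ x ∈ Metric.ball (0 : EuclideanSpace ℝ (Fin n)) r₀,
      ‖J k x‖ ≤ Abar)
    (hJLip : ∀ k, ∀ x ∈ Metric.ball (0 : EuclideanSpace ℝ (Fin n)) r₀,
      ∀ y ∈ Metric.ball (0 : EuclideanSpace ℝ (Fin n)) r₀,
      ‖J k x - J k y‖ ≤ LJ * ‖x - y‖)
    (hd : 0 < d) (hlam : 0 < lam ∧ lam < 1)
    (hES : ∀ (k₀ : ℕ) (x : ℕ → EuclideanSpace ℝ (Fin n)), x k₀ ∈ D →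
      (∀ k, k₀ ≤ k → x (k + 1) = f k (x k)) →
      ∀ k, k₀ ≤ k → ‖x k‖ ≤ d * ‖x k₀‖ * lam ^ (k - k₀)) :
    ∃ dA lamA : ℝ, 0 < dA ∧ 0 < lamA ∧ lamA < 1 ∧
      ∀ (k₀ : ℕ) (z : ℕ → EuclideanSpace ℝ (Fin n)),
        (∀ k, k₀ ≤ k → z (k + 1) = J k 0 (z k)) →
        ∀ k, k₀ ≤ k → ‖z k‖ ≤ dA * lamA ^ (k - k₀) * ‖z k₀‖ :=
  linearization_uniformly_exponentially_stable_general n D f d lam r₀ J hf0 hr₀ hball hJ hd hlam hES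
end

section
/- (Converse Lyapunov theorem for exponential stability with respect to a set.) Let A ⊆ ℝⁿ be a closed set. Suppose the system x_{k+1} = f(k, x_k) is uniformly exponentially stable in D with respect to A: there exist d > 0 and λ ∈ (0,1) such that every solution with x_{k₀} = ξ ∈ D satisfies dist(x_k, A) ≤ d · dist(ξ, A) · λ^{k−k₀} for all k ≥ k₀, where dist denotes the Euclidean point-to-set distance. Then there exist a function V : ℕ → ℝⁿ → ℝ and constants c₁, c₂ > 0 and β ∈ (0,1) such that for all ξ ∈ D and all k: c₁ · dist(ξ, A)² ≤ V(k, ξ) ≤ c₂ · dist(ξ, A)² and V(k+1, f(k, ξ)) ≤ β² V(k, ξ). -/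
/-!
The Lyapunov function is the truncated weighted sum
`V(k, ξ) = ∑_{j<M} β^(-2j) dist(x_{k+j}, A)²` along the solution `x` from `(k, ξ)`,
with `λ < β < 1`. The term `j = 0` gives the lower bound, and exponential stability bounds
every term by `d² dist(ξ, A)²`. Passing to `(k + 1, f(k, ξ))` shifts the window by one step:
`β⁻² V(k + 1, f(k, ξ)) = V(k, ξ) - dist(ξ, A)² + β^(-2M) dist(x_{k+M}, A)²`, and the horizon `M`
is chosen with `d² (λ/β)^(2M) ≤ 1`, so that the new last term is at most the dropped first one.
-/

open Finset Filter

/-- The state at time `k + j` of the solution of `x (m + 1) = f m (x m)` with `x k = ξ`. -/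
def flowFrom {α : Type*} (f : ℕ → α → α) (k : ℕ) (ξ : α) : ℕ → α
  | 0 => ξ
  | j + 1 => f (k + j) (flowFrom f k ξ j)

namespace flowFrom

variable {α : Type*} (f : ℕ → α → α)

@[simp]
theorem zero (k : ℕ) (ξ : α) : flowFrom f k ξ 0 = ξ := rfl

theorem succ (k : ℕ) (ξ : α) (j : ℕ) :
    flowFrom f k ξ (j + 1) = f (k + j) (flowFrom f k ξ j) := rfl

theorem succ_start (k : ℕ) (ξ : α) (j : ℕ) :
    flowFrom f (k + 1) (f k ξ) j = flowFrom f k ξ (j + 1) := by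
  induction j with
  | zero => rfl
  | succ j ih => rw [succ, ih, succ f k ξ (j + 1), Nat.add_right_comm, Nat.add_assoc]

theorem succ_sub (k : ℕ) (ξ : α) {m : ℕ} (hm : k ≤ m) :
    flowFrom f k ξ (m + 1 - k) = f m (flowFrom f k ξ (m - k)) := by
  rw [Nat.sub_add_comm hm, succ, Nat.add_sub_cancel' hm]

end flowFrom

theorem exists_pos_mul_pow_le_pow {C ρ σ : ℝ} (hρ : 0 ≤ ρ) (hρσ : ρ < σ) :
    ∃ M : ℕ, 0 < M ∧ C * ρ ^ M ≤ σ ^ M := by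
  have hσ : 0 < σ := hρ.trans_lt hρσ
  have hlim : Tendsto (fun M : ℕ => C * (ρ / σ) ^ M) atTop (nhds 0) := by
    simpa using (tendsto_pow_atTop_nhds_zero_of_lt_one (div_nonneg hρ hσ.le)
      ((div_lt_one hσ).2 hρσ)).const_mul C
  obtain ⟨M, hM, hlt⟩ := ((eventually_gt_atTop 0).and (hlim.eventually_lt_const one_pos)).exists
  refine ⟨M, hM, ?_⟩
  rw [div_pow, ← mul_div_assoc, div_lt_one (pow_pos hσ M)] at hlt
  exact hlt.le

section WeightedCost

variable {α : Type*} (f : ℕ → α → α) (g : α → ℝ) (σ : ℝ) (M : ℕ)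

noncomputable def weightedCost (k : ℕ) (ξ : α) : ℝ :=
  ∑ j ∈ range M, g (flowFrom f k ξ j) / σ ^ j

variable {f g σ M}

theorem le_weightedCost (hg : ∀ x, 0 ≤ g x) (hσ : 0 < σ) (hM : 0 < M) (k : ℕ) (ξ : α) :
    g ξ ≤ weightedCost f g σ M k ξ := by
  have := single_le_sum (f := fun j => g (flowFrom f k ξ j) / σ ^ j)
    (fun j _ => div_nonneg (hg _) (pow_nonneg hσ.le j)) (mem_range.2 hM)
  simpa [weightedCost] using this

theorem weightedCost_le {C ρ : ℝ} (hρ : 0 ≤ ρ) (hσ : 0 < σ) (hρσ : ρ ≤ σ) {k : ℕ} {ξ : α}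
    (hξ : 0 ≤ g ξ) (hdecay : ∀ j, g (flowFrom f k ξ j) ≤ C * ρ ^ j * g ξ) :
    weightedCost f g σ M k ξ ≤ M * C * g ξ := by
  have hCg : 0 ≤ C * g ξ := by simpa using hξ.trans (hdecay 0)
  calc weightedCost f g σ M k ξ ≤ ∑ j ∈ range M, C * g ξ := by
        refine sum_le_sum fun j _ => ?_
        have hρσj : ρ ^ j ≤ σ ^ j := pow_le_pow_left₀ hρ hρσ j
        rw [div_le_iff₀ (pow_pos hσ j)]
        calc g (flowFrom f k ξ j) ≤ C * g ξ * ρ ^ j := by linarith [hdecay j]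
          _ ≤ C * g ξ * σ ^ j := mul_le_mul_of_nonneg_left hρσj hCg
    _ = M * C * g ξ := by rw [sum_const, card_range, nsmul_eq_mul, mul_assoc]

theorem weightedCost_succ (hσ : σ ≠ 0) (k : ℕ) (ξ : α) :
    weightedCost f g σ M (k + 1) (f k ξ) =
      σ * (weightedCost f g σ M k ξ + g (flowFrom f k ξ M) / σ ^ M - g ξ) := by
  have hshift := sum_range_succ' (fun j => g (flowFrom f k ξ j) / σ ^ j) M
  rw [sum_range_succ] at hshift
  simp only [weightedCost, flowFrom.succ_start]
  rw [hshift, flowFrom.zero, pow_zero, div_one, add_sub_cancel_right, mul_sum]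
  refine sum_congr rfl fun j _ => ?_
  field_simp
  ring

theorem weightedCost_succ_le (hσ : 0 < σ) {k : ℕ} {ξ : α}
    (hM : g (flowFrom f k ξ M) ≤ σ ^ M * g ξ) :
    weightedCost f g σ M (k + 1) (f k ξ) ≤ σ * weightedCost f g σ M k ξ := by
  have hlast : g (flowFrom f k ξ M) / σ ^ M ≤ g ξ := by
    rwa [div_le_iff₀ (pow_pos hσ M), mul_comm]
  rw [weightedCost_succ hσ.ne']
  gcongr
  linarith

theorem exists_lyapunov_of_exponential_decay {S : Set α} {C ρ : ℝ} (hg : ∀ x, 0 ≤ g x)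
    (hC : 0 < C) (hρ : 0 ≤ ρ) (hρσ : ρ < σ)
    (hdecay : ∀ k, ∀ ξ ∈ S, ∀ j, g (flowFrom f k ξ j) ≤ C * ρ ^ j * g ξ) :
    ∃ (V : ℕ → α → ℝ) (c : ℝ), 0 < c ∧ ∀ k, ∀ ξ ∈ S,
      g ξ ≤ V k ξ ∧ V k ξ ≤ c * g ξ ∧ V (k + 1) (f k ξ) ≤ σ * V k ξ := by
  have hσ : 0 < σ := hρ.trans_lt hρσ
  obtain ⟨M, hM, hCM⟩ := exists_pos_mul_pow_le_pow (C := C) hρ hρσ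
  refine ⟨weightedCost f g σ M, M * C, by positivity, fun k ξ hξ => ⟨?_, ?_, ?_⟩⟩
  · exact le_weightedCost hg hσ hM k ξ
  · exact weightedCost_le hρ hσ hρσ.le (hg ξ) (hdecay k ξ hξ)
  · refine weightedCost_succ_le hσ ((hdecay k ξ hξ M).trans ?_)
    exact mul_le_mul_of_nonneg_right hCM (hg ξ)

end WeightedCost

theorem infDist_flowFrom_le {n : ℕ} {D A : Set (EuclideanSpace ℝ (Fin n))}
    {f : ℕ → EuclideanSpace ℝ (Fin n) → EuclideanSpace ℝ (Fin n)} {d lam : ℝ}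
    (hES : ∀ (k₀ : ℕ) (x : ℕ → EuclideanSpace ℝ (Fin n)), x k₀ ∈ D →
      (∀ k, k₀ ≤ k → x (k + 1) = f k (x k)) →
      ∀ k, k₀ ≤ k →
        Metric.infDist (x k) A ≤ d * Metric.infDist (x k₀) A * lam ^ (k - k₀))
    {k : ℕ} {ξ : EuclideanSpace ℝ (Fin n)} (hξ : ξ ∈ D) (j : ℕ) :
    Metric.infDist (flowFrom f k ξ j) A ≤ d * Metric.infDist ξ A * lam ^ j := by
  have := hES k (fun m => flowFrom f k ξ (m - k)) (by simpa using hξ)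
    (fun m hm => flowFrom.succ_sub f k ξ hm) (k + j) (Nat.le_add_right k j)
  simpa using this

theorem converse_lyapunov_set_stability_general
    (n : ℕ) (D A : Set (EuclideanSpace ℝ (Fin n)))
    (f : ℕ → EuclideanSpace ℝ (Fin n) → EuclideanSpace ℝ (Fin n))
    (d lam : ℝ)
    (hd : 0 < d) (hlam : 0 < lam ∧ lam < 1)
    (hES : ∀ (k₀ : ℕ) (x : ℕ → EuclideanSpace ℝ (Fin n)), x k₀ ∈ D →
      (∀ k, k₀ ≤ k → x (k + 1) = f k (x k)) →
      ∀ k, k₀ ≤ k →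
        Metric.infDist (x k) A ≤ d * Metric.infDist (x k₀) A * lam ^ (k - k₀)) :
    ∃ (V : ℕ → EuclideanSpace ℝ (Fin n) → ℝ) (c₁ c₂ β : ℝ),
      0 < c₁ ∧ 0 < c₂ ∧ 0 < β ∧ β < 1 ∧
      (∀ k, ∀ ξ ∈ D,
        c₁ * Metric.infDist ξ A ^ 2 ≤ V k ξ ∧ V k ξ ≤ c₂ * Metric.infDist ξ A ^ 2) ∧
      (∀ k, ∀ ξ ∈ D, V (k + 1) (f k ξ) ≤ β ^ 2 * V k ξ) := by
  obtain ⟨hlam0, hlam1⟩ := hlam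
  have hdecay : ∀ k, ∀ ξ ∈ D, ∀ j, Metric.infDist (flowFrom f k ξ j) A ^ 2 ≤
      d ^ 2 * (lam ^ 2) ^ j * Metric.infDist ξ A ^ 2 := fun k ξ hξ j => by
    calc Metric.infDist (flowFrom f k ξ j) A ^ 2 ≤ (d * Metric.infDist ξ A * lam ^ j) ^ 2 :=
          pow_le_pow_left₀ Metric.infDist_nonneg (infDist_flowFrom_le hES hξ j) 2
      _ = d ^ 2 * (lam ^ 2) ^ j * Metric.infDist ξ A ^ 2 := by ring
  obtain ⟨V, c, hc, hV⟩ := exists_lyapunov_of_exponential_decay (σ := ((1 + lam) / 2) ^ 2)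
    (fun x => sq_nonneg (Metric.infDist x A)) (by positivity) (sq_nonneg lam)
    (pow_lt_pow_left₀ (by linarith) hlam0.le two_ne_zero) hdecay
  refine ⟨V, 1, c, (1 + lam) / 2, one_pos, hc, by positivity, by linarith, fun k ξ hξ => ?_,
    fun k ξ hξ => (hV k ξ hξ).2.2⟩
  exact ⟨(one_mul _).trans_le (hV k ξ hξ).1, (hV k ξ hξ).2.1⟩

/-- Converse Lyapunov theorem for uniform exponential stability with respect to
a closed set (Theorem 9). -/
theorem converse_lyapunov_set_stability
    (n : ℕ) (D A : Set (EuclideanSpace ℝ (Fin n)))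
    (f : ℕ → EuclideanSpace ℝ (Fin n) → EuclideanSpace ℝ (Fin n))
    (d lam : ℝ)
    (hD : IsCompact D)
    (hA : IsClosed A) (hAne : A.Nonempty)
    (hinv : ∀ k, ∀ x ∈ D, f k x ∈ D)
    (hd : 0 < d) (hlam : 0 < lam ∧ lam < 1)
    (hES : ∀ (k₀ : ℕ) (x : ℕ → EuclideanSpace ℝ (Fin n)), x k₀ ∈ D →
      (∀ k, k₀ ≤ k → x (k + 1) = f k (x k)) →
      ∀ k, k₀ ≤ k →
        Metric.infDist (x k) A ≤ d * Metric.infDist (x k₀) A * lam ^ (k - k₀)) :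
    ∃ (V : ℕ → EuclideanSpace ℝ (Fin n) → ℝ) (c₁ c₂ β : ℝ),
      0 < c₁ ∧ 0 < c₂ ∧ 0 < β ∧ β < 1 ∧
      (∀ k, ∀ ξ ∈ D,
        c₁ * Metric.infDist ξ A ^ 2 ≤ V k ξ ∧ V k ξ ≤ c₂ * Metric.infDist ξ A ^ 2) ∧
      (∀ k, ∀ ξ ∈ D, V (k + 1) (f k ξ) ≤ β ^ 2 * V k ξ) :=
  converse_lyapunov_set_stability_general n D A f d lam hd hlam hES
end

section
/- (Linear convergence of the projected gradient method for a constrained quadratic program.) Let H ∈ ℝ^{d×d} be symmetric and let 0 < m ≤ Λ be constants with m‖v‖² ≤ vᵀHv ≤ Λ‖v‖² for all v ∈ ℝ^d. Let N ⊆ ℝ^d be a nonempty, closed, convex set, let b ∈ ℝ^d, and let ν* be the (unique) minimizer over N of the strongly convex quadratic q(ν) := νᵀHν + 2bᵀν. Define the projected gradient operator T(ν) := Π_N[ν − α(2Hν + 2b)] with step size α := 1/(Λ + m), where Π_N is the metric projection onto N and 2Hν + 2b is the gradient of q at ν. Then for every ν ∈ ℝ^d and every number of iterations ℓ ∈ ℕ,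 ‖T^ℓ(ν) − ν*‖ ≤ η^ℓ ‖ν − ν*‖, where η := (Λ − m)/(Λ + m) and T^ℓ denotes the ℓ-fold composition of T (T⁰(ν) = ν). -/
/-!
The minimizer `νs` satisfies the first-order condition `⟪Hνs + b, w - νs⟫ ≥ 0` on `N`, which is
exactly the obtuse-angle characterization of `νs` as the nearest point of `N` to
`νs - α ∇q(νs)`; hence `νs` is a fixed point of `T`. Nearest-point maps onto convex sets are
nonexpansive, so `T` is Lipschitz with the operator norm of `1 - 2α H`, and the step size
`α = 1 / (Λ + m)` makes that norm at most `(Λ - m) / (Λ + m)`.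
-/

open scoped RealInnerProductSpace

open Filter Topology in
theorem nonneg_of_forall_mul_add_sq_mul_nonneg {a c : ℝ}
    (h : ∀ t ∈ Set.Ioc (0 : ℝ) 1, 0 ≤ t * a + t ^ 2 * c) : 0 ≤ a := by
  have hlim : Tendsto (fun t ↦ a + t * c) (𝓝[>] 0) (𝓝 a) := by
    have hcont : Continuous fun t : ℝ ↦ a + t * c := by fun_prop
    exact (hcont.tendsto' 0 a (by simp)).mono_left nhdsWithin_le_nhds
  refine ge_of_tendsto hlim ?_
  filter_upwards [Ioc_mem_nhdsGT zero_lt_one] with t ht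
  have := h t ht
  rw [show t * a + t ^ 2 * c = t * (a + t * c) by ring] at this
  exact (mul_nonneg_iff_of_pos_left ht.1).1 this

section

variable {E : Type*} [NormedAddCommGroup E] [InnerProductSpace ℝ E]

def IsNearestPoint (N : Set E) (z p : E) : Prop :=
  p ∈ N ∧ ∀ y ∈ N, ‖z - p‖ ≤ ‖z - y‖

variable {N : Set E}

theorem isNearestPoint_iff_real_inner_le_zero (hN : Convex ℝ N) {z p : E} (hp : p ∈ N) :
    IsNearestPoint N z p ↔ ∀ w ∈ N, ⟪z - p, w - p⟫ ≤ 0 := by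
  have : Nonempty N := ⟨⟨p, hp⟩⟩
  have hbdd : BddBelow (Set.range fun w : N ↦ ‖z - w‖) :=
    ⟨0, Set.forall_mem_range.2 fun _ ↦ norm_nonneg _⟩
  rw [← norm_eq_iInf_iff_real_inner_le_zero hN hp, IsNearestPoint, and_iff_right hp]
  constructor
  · exact fun h ↦ le_antisymm (le_ciInf fun w ↦ h w w.2) (ciInf_le hbdd ⟨p, hp⟩)
  · exact fun h y hy ↦ h ▸ ciInf_le hbdd ⟨y, hy⟩

theorem IsNearestPoint.norm_sub_le (hN : Convex ℝ N) {x y px py : E}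
    (hx : IsNearestPoint N x px) (hy : IsNearestPoint N y py) : ‖px - py‖ ≤ ‖x - y‖ := by
  have hx' := (isNearestPoint_iff_real_inner_le_zero hN hx.1).1 hx py hy.1
  have hy' := (isNearestPoint_iff_real_inner_le_zero hN hy.1).1 hy px hx.1
  have key : ‖px - py‖ ^ 2 ≤ ‖x - y‖ * ‖px - py‖ :=
    calc ‖px - py‖ ^ 2
        = ⟪x - y, px - py⟫ + ⟪x - px, py - px⟫ + ⟪y - py, px - py⟫ := by
          rw [← real_inner_self_eq_norm_sq]
          simp only [inner_sub_left, inner_sub_right, real_inner_comm]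
          ring
      _ ≤ ⟪x - y, px - py⟫ := by linarith
      _ ≤ ‖x - y‖ * ‖px - py‖ := real_inner_le_norm _ _
  nlinarith [norm_nonneg (px - py), norm_nonneg (x - y)]

theorem IsNearestPoint.eq (hN : Convex ℝ N) {z p q : E}
    (hp : IsNearestPoint N z p) (hq : IsNearestPoint N z q) : p = q := by
  have := hp.norm_sub_le hN hq
  rwa [sub_self, norm_zero, norm_le_zero_iff, sub_eq_zero] at this

theorem ContinuousLinearMap.norm_le_of_abs_inner_self_le {T : E →L[ℝ] E}
    (hT : (T : E →ₗ[ℝ] E).IsSymmetric) {c : ℝ} (hc : 0 ≤ c)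
    (h : ∀ x, |⟪T x, x⟫| ≤ c * ‖x‖ ^ 2) : ‖T‖ ≤ c := by
  rw [T.norm_eq_iSup_rayleighQuotient hT]
  refine ciSup_le fun x ↦ ?_
  rcases eq_or_ne x 0 with rfl | hx
  · simpa using hc
  · rw [rayleighQuotient, reApplyInnerSelf_apply, abs_div, abs_sq,
      div_le_iff₀ (by positivity)]
    simpa using h x

variable {A : E →L[ℝ] E} {b : E}

theorem norm_sub_smul_apply_le (hA : (A : E →ₗ[ℝ] E).IsSymmetric) {m Λ : ℝ}
    (hΛm : 0 < Λ + m) (hmΛ : m ≤ Λ)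
    (hbounds : ∀ v, m * ‖v‖ ^ 2 ≤ ⟪v, A v⟫ ∧ ⟪v, A v⟫ ≤ Λ * ‖v‖ ^ 2) (v : E) :
    ‖v - (2 / (Λ + m)) • A v‖ ≤ (Λ - m) / (Λ + m) * ‖v‖ := by
  set S : E →L[ℝ] E := ContinuousLinearMap.id ℝ E - (2 / (Λ + m)) • A
  have hS : (S : E →ₗ[ℝ] E).IsSymmetric := by
    simpa [S] using LinearMap.IsSymmetric.id.sub (hA.smul (by simp))
  have hSnorm : ‖S‖ ≤ (Λ - m) / (Λ + m) := by
    refine S.norm_le_of_abs_inner_self_le hS (div_nonneg (by linarith) hΛm.le) fun x ↦ ?_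
    obtain ⟨hlow, hup⟩ := hbounds x
    have hSx : ⟪S x, x⟫ = ‖x‖ ^ 2 - 2 / (Λ + m) * ⟪x, A x⟫ := by
      rw [real_inner_comm]
      simp [S, inner_sub_right, real_inner_smul_right]
    rw [hSx, abs_le]
    constructor
    · have : ‖x‖ ^ 2 - 2 / (Λ + m) * ⟪x, A x⟫ + (Λ - m) / (Λ + m) * ‖x‖ ^ 2
          = 2 / (Λ + m) * (Λ * ‖x‖ ^ 2 - ⟪x, A x⟫) := by field_simp; ring
      nlinarith [div_pos two_pos hΛm]
    · have : (Λ - m) / (Λ + m) * ‖x‖ ^ 2 - (‖x‖ ^ 2 - 2 / (Λ + m) * ⟪x, A x⟫)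
          = 2 / (Λ + m) * (⟪x, A x⟫ - m * ‖x‖ ^ 2) := by field_simp; ring
      nlinarith [div_pos two_pos hΛm]
  simpa [S] using S.le_of_opNorm_le hSnorm v

theorem IsMinOn.real_inner_apply_add_sub_nonneg (hA : (A : E →ₗ[ℝ] E).IsSymmetric)
    (hN : Convex ℝ N) {x : E} (hx : x ∈ N)
    (hmin : IsMinOn (fun ν ↦ ⟪ν, A ν⟫ + 2 * ⟪b, ν⟫) N x) {w : E} (hw : w ∈ N) :
    0 ≤ ⟪A x + b, w - x⟫ := by
  suffices h : 0 ≤ 2 * ⟪A x + b, w - x⟫ by linarith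
  refine nonneg_of_forall_mul_add_sq_mul_nonneg (c := ⟪w - x, A (w - x)⟫) fun t ht ↦ ?_
  have hmem : x + t • (w - x) ∈ N := by
    simpa using hN.add_smul_sub_mem hx hw ⟨ht.1.le, ht.2⟩
  have hle := isMinOn_iff.1 hmin _ hmem
  have hsymm : ⟪w - x, A x⟫ = ⟪x, A (w - x)⟫ := (real_inner_comm _ _).trans (hA x (w - x))
  simp only [map_add, map_smul, inner_add_left, inner_add_right, real_inner_smul_left,
    real_inner_smul_right] at hle ⊢
  rw [← hsymm] at hle
  rw [real_inner_comm (w - x) (A x)]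
  linarith

def projGradStep (proj : E → E) (A : E →L[ℝ] E) (b : E) (α : ℝ) (ν : E) : E :=
  proj (ν - α • ((2 : ℝ) • A ν + (2 : ℝ) • b))

variable {proj : E → E}

theorem projGradStep_eq_self (hA : (A : E →ₗ[ℝ] E).IsSymmetric) (hN : Convex ℝ N)
    (hproj : ∀ z, IsNearestPoint N z (proj z)) {x : E} (hx : x ∈ N)
    (hmin : IsMinOn (fun ν ↦ ⟪ν, A ν⟫ + 2 * ⟪b, ν⟫) N x) {α : ℝ} (hα : 0 ≤ α) :
    projGradStep proj A b α x = x := by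
  refine (hproj _).eq hN ((isNearestPoint_iff_real_inner_le_zero hN hx).2 fun w hw ↦ ?_)
  have hstep : x - α • ((2 : ℝ) • A x + (2 : ℝ) • b) - x = -(2 * α) • (A x + b) := by module
  rw [hstep, real_inner_smul_left]
  nlinarith [hmin.real_inner_apply_add_sub_nonneg hA hN hx hw]

theorem lipschitzWith_projGradStep (hA : (A : E →ₗ[ℝ] E).IsSymmetric) (hN : Convex ℝ N)
    (hproj : ∀ z, IsNearestPoint N z (proj z)) {m Λ : ℝ} (hΛm : 0 < Λ + m) (hmΛ : m ≤ Λ)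
    (hbounds : ∀ v, m * ‖v‖ ^ 2 ≤ ⟪v, A v⟫ ∧ ⟪v, A v⟫ ≤ Λ * ‖v‖ ^ 2) :
    LipschitzWith (Real.toNNReal ((Λ - m) / (Λ + m))) (projGradStep proj A b (1 / (Λ + m))) :=
  LipschitzWith.of_dist_le' fun x y ↦ by
    rw [dist_eq_norm, dist_eq_norm]
    calc _ ≤ ‖(x - (1 / (Λ + m)) • ((2 : ℝ) • A x + (2 : ℝ) • b))
            - (y - (1 / (Λ + m)) • ((2 : ℝ) • A y + (2 : ℝ) • b))‖ :=
          (hproj _).norm_sub_le hN (hproj _)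
      _ = ‖(x - y) - (2 / (Λ + m)) • A (x - y)‖ := by rw [map_sub]; congr 1; module
      _ ≤ _ := norm_sub_smul_apply_le hA hΛm hmΛ hbounds _

end

theorem Matrix.IsSymm.isSymmetric_toEuclideanCLM {n : Type*} [Fintype n] [DecidableEq n]
    {H : Matrix n n ℝ} (hH : H.IsSymm) :
    (Matrix.toEuclideanCLM (𝕜 := ℝ) H : EuclideanSpace ℝ n →ₗ[ℝ] EuclideanSpace ℝ n).IsSymmetric :=
  Matrix.isSymmetric_toEuclideanLin_iff.2 <| by
    rwa [Matrix.IsHermitian, Matrix.conjTranspose_eq_transpose_of_trivial]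

theorem pgm_linear_convergence_general
    (d : ℕ) (H : Matrix (Fin d) (Fin d) ℝ) (hHsymm : H.IsSymm)
    (m Λ : ℝ) (hm : 0 < m) (hmΛ : m ≤ Λ)
    (hH : ∀ v : EuclideanSpace ℝ (Fin d),
      m * ‖v‖ ^ 2 ≤ ⟪v, Matrix.toEuclideanCLM (𝕜 := ℝ) H v⟫ ∧
      ⟪v, Matrix.toEuclideanCLM (𝕜 := ℝ) H v⟫ ≤ Λ * ‖v‖ ^ 2)
    (N : Set (EuclideanSpace ℝ (Fin d)))
    (hNconvex : Convex ℝ N)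
    (b : EuclideanSpace ℝ (Fin d))
    -- `proj` is the metric projection onto `N`
    (proj : EuclideanSpace ℝ (Fin d) → EuclideanSpace ℝ (Fin d))
    (hproj : ∀ z, proj z ∈ N ∧ ∀ y ∈ N, ‖z - proj z‖ ≤ ‖z - y‖)
    -- `νs` is the minimizer of `q(ν) = νᵀHν + 2bᵀν` over `N`
    (νs : EuclideanSpace ℝ (Fin d)) (hνsN : νs ∈ N)
    (hνsmin : ∀ ν ∈ N,
      ⟪νs, Matrix.toEuclideanCLM (𝕜 := ℝ) H νs⟫ + 2 * ⟪b, νs⟫ ≤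
      ⟪ν, Matrix.toEuclideanCLM (𝕜 := ℝ) H ν⟫ + 2 * ⟪b, ν⟫)
    -- `T` is the projected gradient operator with step size `α = 1/(Λ + m)`
    (T : EuclideanSpace ℝ (Fin d) → EuclideanSpace ℝ (Fin d))
    (hT : ∀ ν, T ν =
      proj (ν - (1 / (Λ + m)) •
        ((2 : ℝ) • Matrix.toEuclideanCLM (𝕜 := ℝ) H ν + (2 : ℝ) • b))) :
    ∀ (ν : EuclideanSpace ℝ (Fin d)) (ℓ : ℕ),
      ‖T^[ℓ] ν - νs‖ ≤ ((Λ - m) / (Λ + m)) ^ ℓ * ‖ν - νs‖ := by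
  have hΛm : 0 < Λ + m := by linarith
  have hA := hHsymm.isSymmetric_toEuclideanCLM
  obtain rfl : T = projGradStep proj _ b (1 / (Λ + m)) := funext hT
  have hfix := projGradStep_eq_self hA hNconvex hproj hνsN (isMinOn_iff.2 hνsmin)
    (α := 1 / (Λ + m)) (by positivity)
  have hlip := lipschitzWith_projGradStep (b := b) hA hNconvex hproj hΛm hmΛ hH
  intro ν ℓ
  have := (hlip.iterate ℓ).dist_le_mul ν νs
  rwa [Function.iterate_fixed hfix, dist_eq_norm, dist_eq_norm, NNReal.coe_pow,
    Real.coe_toNNReal _ (div_nonneg (by linarith) hΛm.le)] at this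

/-- Linear convergence of the projected gradient method for a constrained
quadratic program (Theorem 10). -/
theorem pgm_linear_convergence
    (d : ℕ) (H : Matrix (Fin d) (Fin d) ℝ) (hHsymm : H.IsSymm)
    (m Λ : ℝ) (hm : 0 < m) (hmΛ : m ≤ Λ)
    (hH : ∀ v : EuclideanSpace ℝ (Fin d),
      m * ‖v‖ ^ 2 ≤ ⟪v, Matrix.toEuclideanCLM (𝕜 := ℝ) H v⟫ ∧
      ⟪v, Matrix.toEuclideanCLM (𝕜 := ℝ) H v⟫ ≤ Λ * ‖v‖ ^ 2)
    (N : Set (EuclideanSpace ℝ (Fin d)))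
    (hNne : N.Nonempty) (hNclosed : IsClosed N) (hNconvex : Convex ℝ N)
    (b : EuclideanSpace ℝ (Fin d))
    -- `proj` is the metric projection onto `N`
    (proj : EuclideanSpace ℝ (Fin d) → EuclideanSpace ℝ (Fin d))
    (hproj : ∀ z, proj z ∈ N ∧ ∀ y ∈ N, ‖z - proj z‖ ≤ ‖z - y‖)
    -- `νs` is the minimizer of `q(ν) = νᵀHν + 2bᵀν` over `N`
    (νs : EuclideanSpace ℝ (Fin d)) (hνsN : νs ∈ N)
    (hνsmin : ∀ ν ∈ N,
      ⟪νs, Matrix.toEuclideanCLM (𝕜 := ℝ) H νs⟫ + 2 * ⟪b, νs⟫ ≤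
      ⟪ν, Matrix.toEuclideanCLM (𝕜 := ℝ) H ν⟫ + 2 * ⟪b, ν⟫)
    -- `T` is the projected gradient operator with step size `α = 1/(Λ + m)`
    (T : EuclideanSpace ℝ (Fin d) → EuclideanSpace ℝ (Fin d))
    (hT : ∀ ν, T ν =
      proj (ν - (1 / (Λ + m)) •
        ((2 : ℝ) • Matrix.toEuclideanCLM (𝕜 := ℝ) H ν + (2 : ℝ) • b))) :
    ∀ (ν : EuclideanSpace ℝ (Fin d)) (ℓ : ℕ),
      ‖T^[ℓ] ν - νs‖ ≤ ((Λ - m) / (Λ + m)) ^ ℓ * ‖ν - νs‖ :=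
  pgm_linear_convergence_general d H hHsymm m Λ hm hmΛ hH N hNconvex b proj hproj νs hνsN hνsmin T
    hT
end

section
/- (Lipschitz continuity of the solution mapping of a parametric constrained quadratic program.) Let H ∈ ℝ^{d×d} be symmetric positive definite, let G ∈ ℝ^{d×n}, and let N ⊆ ℝ^d be a nonempty, closed, convex set. For x ∈ ℝⁿ let μ*(x) ∈ N denote the unique minimizer over N of the strongly convex quadratic ν ↦ νᵀHν + 2νᵀGx. Then for all x, y ∈ ℝⁿ, ‖μ*(x) − μ*(y)‖ ≤ ‖H^{−1/2}‖ · ‖G(x − y)‖_{H^{−1}} ≤ L‖x − y‖ with Lipschitz constant L := ‖H^{−1/2}‖ · ‖H^{−1/2} G‖, where H^{1/2} is the unique symmetric positive definite square root of H, H^{−1/2} is its inverse, ‖v‖_{H^{−1}} := √(vᵀH^{−1}v), and matrix norms are operator (spectral) norms. -/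
open scoped Matrix.Norms.L2Operator RealInnerProductSpace
open Matrix

/-- The positive semidefinite square root of a positive semidefinite matrix
(the definition `Matrix.PosSemidef.sqrt` of the older Mathlib, since removed). -/
noncomputable def Matrix.PosSemidef.sqrt {n 𝕜 : Type*} [Fintype n] [DecidableEq n] [RCLike 𝕜]
    [PartialOrder 𝕜]    {A : Matrix n n 𝕜} (hA : A.PosSemidef) : Matrix n n 𝕜 :=
  hA.1.eigenvectorUnitary.1 * diagonal ((↑) ∘ (√·) ∘ hA.1.eigenvalues) *
  (star hA.1.eigenvectorUnitary : Matrix n n 𝕜)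


set_option maxHeartbeats 1000000 in
/-- Lipschitz continuity of the solution mapping of a parametric constrained
quadratic program (Lemma 6). Here `hH.posSemidef.sqrt` is the unique symmetric
positive (semi)definite square root `H^{1/2}` of `H`, matrix norms are the
`ℓ²`-operator (spectral) norms, and `‖v‖_{H⁻¹} = √(vᵀH⁻¹v)` is expressed via
the inner product. -/
theorem qp_solution_mapping_lipschitz
    (d n : ℕ) (H : Matrix (Fin d) (Fin d) ℝ) (hH : H.PosDef) (hHsymm : H.IsSymm)
    (G : Matrix (Fin d) (Fin n) ℝ)
    (N : Set (EuclideanSpace ℝ (Fin d)))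
    (hNne : N.Nonempty) (hNclosed : IsClosed N) (hNconvex : Convex ℝ N)
    (μs : EuclideanSpace ℝ (Fin n) → EuclideanSpace ℝ (Fin d))
    (hμsN : ∀ x, μs x ∈ N)
    (hμsmin : ∀ (x : EuclideanSpace ℝ (Fin n)), ∀ ν ∈ N,
      ⟪μs x, Matrix.toEuclideanCLM (𝕜 := ℝ) H (μs x)⟫
          + 2 * ⟪μs x, Matrix.toEuclideanLin G x⟫ ≤
        ⟪ν, Matrix.toEuclideanCLM (𝕜 := ℝ) H ν⟫
          + 2 * ⟪ν, Matrix.toEuclideanLin G x⟫) :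
    ∀ x y : EuclideanSpace ℝ (Fin n),
      ‖μs x - μs y‖ ≤
          ‖(hH.posSemidef.sqrt)⁻¹‖ *
            Real.sqrt ⟪Matrix.toEuclideanLin G (x - y),
              Matrix.toEuclideanCLM (𝕜 := ℝ) H⁻¹ (Matrix.toEuclideanLin G (x - y))⟫ ∧
      ‖(hH.posSemidef.sqrt)⁻¹‖ *
          Real.sqrt ⟪Matrix.toEuclideanLin G (x - y),
            Matrix.toEuclideanCLM (𝕜 := ℝ) H⁻¹ (Matrix.toEuclideanLin G (x - y))⟫ ≤
        (‖(hH.posSemidef.sqrt)⁻¹‖ * ‖(hH.posSemidef.sqrt)⁻¹ * G‖) * ‖x - y‖ := by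
  intro x y
  set S := hH.posSemidef.sqrt with hSdef
  have hsq : S * S = H := by
    have hA := hH.posSemidef
    conv_rhs => rw [hA.1.spectral_theorem, Unitary.conjStarAlgAut_apply]
    rw [hSdef, Matrix.PosSemidef.sqrt]
    have hu : (star hA.1.eigenvectorUnitary : Matrix (Fin d) (Fin d) ℝ) * hA.1.eigenvectorUnitary = 1 :=
      Unitary.coe_star_mul_self _
    have hD : diagonal ((fun x : ℝ => x) ∘ (√·) ∘ hA.1.eigenvalues) * diagonal ((fun x : ℝ => x) ∘ (√·) ∘ hA.1.eigenvalues)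
        = diagonal (RCLike.ofReal ∘ hA.1.eigenvalues : Fin d → ℝ) := by
      rw [diagonal_mul_diagonal]
      congr 1; funext i
      simp [Real.mul_self_sqrt (hA.eigenvalues_nonneg i)]
    have key : ∀ (U V D E : Matrix (Fin d) (Fin d) ℝ), V * U = 1 → D * D = E →
        U * D * V * (U * D * V) = U * E * V := by
      intro U V D E h1 h2
      calc U * D * V * (U * D * V) = U * (D * (V * U) * D) * V := by simp only [Matrix.mul_assoc]
      _ = _ := by rw [h1, Matrix.mul_one, h2]
    exact key _ _ _ _ hu hD
  have hSherm : S.IsHermitian := by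
    rw [hSdef, Matrix.PosSemidef.sqrt, IsHermitian, conjTranspose_mul, conjTranspose_mul,
      diagonal_conjTranspose, Matrix.mul_assoc, ← star_eq_conjTranspose, ← star_eq_conjTranspose,
      star_star, star_trivial]
  have hSinvherm : (S⁻¹).IsHermitian := hSherm.inv
  -- invertibility of S
  have hdetS : IsUnit S.det := by
    have hdet : S.det * S.det = H.det := by rw [← det_mul, hsq]
    have := hH.det_pos
    refine isUnit_iff_ne_zero.mpr fun h => ?_
    rw [h, mul_zero] at hdet
    linarith [hdet ▸ this]
  have hSinvS : S⁻¹ * S = 1 := nonsing_inv_mul S hdetS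
  have hSSinv : S * S⁻¹ = 1 := mul_nonsing_inv S hdetS
  set A : EuclideanSpace ℝ (Fin d) →L[ℝ] EuclideanSpace ℝ (Fin d) :=
    toEuclideanCLM (𝕜 := ℝ) S with hAdef
  set B : EuclideanSpace ℝ (Fin d) →L[ℝ] EuclideanSpace ℝ (Fin d) :=
    toEuclideanCLM (𝕜 := ℝ) S⁻¹ with hBdef
  have hAsa : _root_.IsSelfAdjoint A := by
    have h1 : star A = toEuclideanCLM (𝕜 := ℝ) (star S) := (map_star _ _).symm
    show star A = A
    rw [h1, Matrix.star_eq_conjTranspose, hSherm.eq]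
  have hBsa : _root_.IsSelfAdjoint B := by
    have h1 : star B = toEuclideanCLM (𝕜 := ℝ) (star S⁻¹) := (map_star _ _).symm
    show star B = B
    rw [h1, Matrix.star_eq_conjTranspose, hSinvherm.eq]
  have hAsym : ∀ u v : EuclideanSpace ℝ (Fin d), ⟪A u, v⟫ = ⟪u, A v⟫ :=
    fun u v => hAsa.isSymmetric u v
  have hBsym : ∀ u v : EuclideanSpace ℝ (Fin d), ⟪B u, v⟫ = ⟪u, B v⟫ :=
    fun u v => hBsa.isSymmetric u v
  have hHCLM : ∀ v : EuclideanSpace ℝ (Fin d),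
      toEuclideanCLM (𝕜 := ℝ) H v = A (A v) := by
    intro v
    rw [← hsq, _root_.map_mul]
    rfl
  have hHinvCLM : ∀ v : EuclideanSpace ℝ (Fin d),
      toEuclideanCLM (𝕜 := ℝ) H⁻¹ v = B (B v) := by
    intro v
    rw [← hsq, Matrix.mul_inv_rev, _root_.map_mul]
    rfl
  have hBA : ∀ v : EuclideanSpace ℝ (Fin d), B (A v) = v := by
    intro v
    have h : B * A = 1 := by rw [hAdef, hBdef, ← _root_.map_mul, hSinvS, _root_.map_one]
    calc B (A v) = (B * A) v := rfl
    _ = v := by rw [h]; rfl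
  have hAB : ∀ v : EuclideanSpace ℝ (Fin d), A (B v) = v := by
    intro v
    have h : A * B = 1 := by rw [hAdef, hBdef, ← _root_.map_mul, hSSinv, _root_.map_one]
    calc A (B v) = (A * B) v := rfl
    _ = v := by rw [h]; rfl
  have hHsym : ∀ u v : EuclideanSpace ℝ (Fin d),
      ⟪u, toEuclideanCLM (𝕜 := ℝ) H v⟫ = ⟪v, toEuclideanCLM (𝕜 := ℝ) H u⟫ := by
    intro u v
    calc ⟪u, toEuclideanCLM (𝕜 := ℝ) H v⟫ = ⟪u, A (A v)⟫ := by rw [hHCLM]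
    _ = ⟪A u, A v⟫ := (hAsym u (A v)).symm
    _ = ⟪A v, A u⟫ := real_inner_comm _ _
    _ = ⟪v, A (A u)⟫ := hAsym v (A u)
    _ = ⟪v, toEuclideanCLM (𝕜 := ℝ) H u⟫ := by rw [hHCLM]
  have hHnn : ∀ v : EuclideanSpace ℝ (Fin d),
      ⟪v, toEuclideanCLM (𝕜 := ℝ) H v⟫ = ‖A v‖ ^ 2 := by
    intro v
    rw [hHCLM, ← hAsym, real_inner_self_eq_norm_sq]
  -- variational inequality
  have key : ∀ (z : EuclideanSpace ℝ (Fin n)), ∀ ν ∈ N,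
      0 ≤ ⟪ν - μs z, toEuclideanCLM (𝕜 := ℝ) H (μs z)⟫
        + ⟪ν - μs z, toEuclideanLin G z⟫ := by
    intro z ν hν
    set u := μs z with hudef
    set c : EuclideanSpace ℝ (Fin d) := ν - u with hcdef
    have hquad : ∀ t : ℝ, 0 < t → t ≤ 1 →
        0 ≤ t * ⟪c, toEuclideanCLM (𝕜 := ℝ) H c⟫
          + 2 * (⟪c, toEuclideanCLM (𝕜 := ℝ) H u⟫ + ⟪c, toEuclideanLin G z⟫) := by
      intro t ht ht1
      have hmem : u + t • c ∈ N := by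
        have heq : u + t • c = (1 - t) • u + t • ν := by
          rw [hcdef]; module
        rw [heq]
        exact hNconvex (hμsN z) hν (by linarith) (le_of_lt ht) (by ring)
      have hle := hμsmin z (u + t • c) hmem
      have hexp1 : ⟪u + t • c, toEuclideanCLM (𝕜 := ℝ) H (u + t • c)⟫
          = ⟪u, toEuclideanCLM (𝕜 := ℝ) H u⟫ + 2 * t * ⟪c, toEuclideanCLM (𝕜 := ℝ) H u⟫
            + t ^ 2 * ⟪c, toEuclideanCLM (𝕜 := ℝ) H c⟫ := by
        rw [map_add, (toEuclideanCLM (𝕜 := ℝ) H).map_smul, inner_add_left,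
          inner_add_right, inner_add_right, real_inner_smul_left, real_inner_smul_left,
          real_inner_smul_right, real_inner_smul_right, hHsym u c]
        ring
      have hexp2 : ⟪u + t • c, toEuclideanLin G z⟫
          = ⟪u, toEuclideanLin G z⟫ + t * ⟪c, toEuclideanLin G z⟫ := by
        rw [inner_add_left, real_inner_smul_left]
      rw [hexp1, hexp2] at hle
      have h0 : 0 ≤ t * (t * ⟪c, toEuclideanCLM (𝕜 := ℝ) H c⟫
          + 2 * (⟪c, toEuclideanCLM (𝕜 := ℝ) H u⟫ + ⟪c, toEuclideanLin G z⟫)) := by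
        nlinarith [hle]
      nlinarith [h0, ht]
    set a := ⟪c, toEuclideanCLM (𝕜 := ℝ) H c⟫ with hadef
    set b := ⟪c, toEuclideanCLM (𝕜 := ℝ) H u⟫ + ⟪c, toEuclideanLin G z⟫ with hbdef
    have ha : 0 ≤ a := by rw [hadef, hHnn]; positivity
    by_contra hb
    push_neg at hb
    set t : ℝ := min 1 (-b / (a + 1)) with htdef
    have ht0 : 0 < t := lt_min one_pos (div_pos (by linarith) (by linarith))
    have ht1 : t ≤ 1 := min_le_left _ _
    have htb : t * (a + 1) ≤ -b := by
      have h1 : t ≤ -b / (a + 1) := min_le_right _ _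
      calc t * (a + 1) ≤ (-b / (a + 1)) * (a + 1) :=
            mul_le_mul_of_nonneg_right h1 (by linarith)
      _ = -b := by field_simp
    have hq := hquad t ht0 ht1
    nlinarith [hq, htb, ht0, hb]
  -- combine the two variational inequalities
  set w : EuclideanSpace ℝ (Fin d) := μs x - μs y with hwdef
  set zv : EuclideanSpace ℝ (Fin d) := toEuclideanLin G (x - y) with hzdef
  have hmain : ⟪w, toEuclideanCLM (𝕜 := ℝ) H w⟫ ≤ -⟪w, zv⟫ := by
    have h1 := key x (μs y) (hμsN y)
    have h2 := key y (μs x) (hμsN x)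
    have hTw : ⟪w, toEuclideanCLM (𝕜 := ℝ) H w⟫
        = ⟪w, toEuclideanCLM (𝕜 := ℝ) H (μs x)⟫
          - ⟪w, toEuclideanCLM (𝕜 := ℝ) H (μs y)⟫ := by
      conv_lhs => rw [hwdef, _root_.map_sub, inner_sub_right]
    have hz : ⟪w, zv⟫ = ⟪w, toEuclideanLin G x⟫ - ⟪w, toEuclideanLin G y⟫ := by
      conv_lhs => rw [hzdef, _root_.map_sub, inner_sub_right]
    have e1 : μs y - μs x = -w := by rw [hwdef]; abel
    rw [e1, inner_neg_left, inner_neg_left] at h1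
    linarith [h1, h2, hTw, hz]
  have hAwBz : ‖A w‖ ≤ ‖B zv‖ := by
    have hcs : -⟪A w, B zv⟫ ≤ ‖A w‖ * ‖B zv‖ := by
      have h1 := abs_real_inner_le_norm (A w) (B zv)
      have h2 := neg_abs_le (⟪A w, B zv⟫)
      linarith
    have hwz : ⟪w, zv⟫ = ⟪A w, B zv⟫ := by
      rw [hAsym]
      congr 1
      exact (hAB zv).symm
    have hsqw : ‖A w‖ ^ 2 ≤ ‖A w‖ * ‖B zv‖ := by
      rw [← hHnn]
      rw [hwz] at hmain
      linarith
    rcases eq_or_lt_of_le (norm_nonneg (A w)) with h | h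
    · rw [← h]; exact norm_nonneg _
    · nlinarith [hsqw, h]
  have hsqrtinner : Real.sqrt ⟪zv, toEuclideanCLM (𝕜 := ℝ) H⁻¹ zv⟫ = ‖B zv‖ := by
    rw [hHinvCLM, ← hBsym, real_inner_self_eq_norm_sq, Real.sqrt_sq (norm_nonneg _)]
  have hnormB : ‖(S⁻¹ : Matrix (Fin d) (Fin d) ℝ)‖ = ‖B‖ := rfl
  constructor
  · -- first inequality
    rw [hsqrtinner, hnormB]
    calc ‖μs x - μs y‖ = ‖B (A w)‖ := by rw [hBA]
    _ ≤ ‖B‖ * ‖A w‖ := B.le_opNorm _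
    _ ≤ ‖B‖ * ‖B zv‖ := mul_le_mul_of_nonneg_left hAwBz (norm_nonneg _)
  · -- second inequality
    rw [hsqrtinner, hnormB, mul_assoc]
    refine mul_le_mul_of_nonneg_left ?_ (norm_nonneg _)
    have hBz : B zv = toEuclideanLin (S⁻¹ * G) (x - y) := by
      rw [hzdef, hBdef]
      simp [toEuclideanLin_apply, ← coe_toEuclideanCLM_eq_toEuclideanLin, mulVec_mulVec]
    rw [hBz]
    exact (S⁻¹ * G).l2_opNorm_mulVec (x - y)
end
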